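/- arXiv:math/0608556 — 12 statements merged into one kernel-verified Lean document; each statement's English description precedes it below -/
import Mathlib

section
/- For positive reals a0,a1,b0,b1,c0,c1 with a1/a0 < b1/b0 < c1/c0, at least one of the following holds: (i) a0·log(a0/a1) + (b0+c0)·log((b0+c0)/(b1+c1)) > b0·log(b0/b1) + (a0+c0)·log((a0+c0)/(a1+c1)) AND a1·log(a1/a0) + (b1+c1)·log((b1+c1)/(b0+c0)) > b1·log(b1/b0) + (a1+c1)·log((a1+c1)/(a0+c0)); or (ii) the analogous pair of inequalities with the roles of a and c exchanged. -/
/-!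
Write a positive pair `x = (x₀, x₁)` as the mass `x₀` sitting at the likelihood ratio
`x₁ / x₀`. Then `x₀ log (x₀ / x₁) = x₀ · f (x₁ / x₀)` with `f = -log`, and
`x₁ log (x₁ / x₀) = x₀ · f (x₁ / x₀)` with `f t = t log t`; both `f` are strictly convex.
The configurations `{b, a + c}`, `{a, b + c}` and `{a + b, c}` have the same total mass and
the same mean ratio. If the ratio of `a + c` is at most that of `b + c`, the first lies inside
the second; otherwise it lies inside the third. In either case the outer configuration has the
larger `f`-moment, for both choices of `f` at once.
-/

open Real Set

lemma div_lt_add_div_add {a b c d : ℝ} (hb : 0 < b) (hd : 0 < d) (h : a / b < c / d) :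
    a / b < (a + c) / (b + d) := by
  rw [div_lt_div_iff₀ hb hd] at h
  rw [div_lt_div_iff₀ hb (by positivity)]
  linarith

lemma add_div_add_lt_div {a b c d : ℝ} (hb : 0 < b) (hd : 0 < d) (h : a / b < c / d) :
    (a + c) / (b + d) < c / d := by
  rw [div_lt_div_iff₀ hb hd] at h
  rw [div_lt_div_iff₀ (by positivity) hd]
  linarith

section TwoPoint

variable {s : Set ℝ} {f : ℝ → ℝ} {u v x : ℝ}

lemma ConvexOn.mul_le_chord (hf : ConvexOn ℝ s f) (hu : u ∈ s) (hv : v ∈ s)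
    (hux : u ≤ x) (hxv : x ≤ v) :
    (v - u) * f x ≤ (v - x) * f u + (x - u) * f v := by
  rcases hux.eq_or_lt with rfl | hux
  · simp
  have huv : 0 < v - u := by linarith
  have hcomb : ((v - x) / (v - u)) • u + ((x - u) / (v - u)) • v = x := by
    simp only [smul_eq_mul]; field_simp; ring
  have key := hf.2 hu hv (div_nonneg (sub_nonneg.2 hxv) huv.le)
    (div_nonneg (sub_nonneg.2 hux.le) huv.le)
    (by field_simp; ring)
  rw [hcomb, smul_eq_mul, smul_eq_mul] at key
  calc (v - u) * f x ≤ (v - u) * ((v - x) / (v - u) * f u + (x - u) / (v - u) * f v) := by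
        gcongr
    _ = (v - x) * f u + (x - u) * f v := by field_simp

lemma StrictConvexOn.mul_lt_chord (hf : StrictConvexOn ℝ s f) (hu : u ∈ s) (hv : v ∈ s)
    (hux : u < x) (hxv : x < v) :
    (v - u) * f x < (v - x) * f u + (x - u) * f v := by
  have huv : 0 < v - u := by linarith
  have hcomb : ((v - x) / (v - u)) • u + ((x - u) / (v - u)) • v = x := by
    simp only [smul_eq_mul]; field_simp; ring
  have key := hf.2 hu hv (hux.trans hxv).ne (div_pos (sub_pos.2 hxv) huv)
    (div_pos (sub_pos.2 hux) huv)
    (by field_simp; ring)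
  rw [hcomb, smul_eq_mul, smul_eq_mul] at key
  calc (v - u) * f x < (v - u) * ((v - x) / (v - u) * f u + (x - u) / (v - u) * f v) := by
        gcongr
    _ = (v - x) * f u + (x - u) * f v := by field_simp

lemma StrictConvexOn.mul_add_mul_lt_of_mem_Ioo_of_mem_Icc (hf : StrictConvexOn ℝ s f)
    {y pu pv qx qy : ℝ} (hu : u ∈ s) (hv : v ∈ s)
    (hx : x ∈ Ioo u v) (hy : y ∈ Icc u v) (hqx : 0 < qx) (hqy : 0 ≤ qy)
    (hmass : qx + qy = pu + pv) (hmean : qx * x + qy * y = pu * u + pv * v) :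
    qx * f x + qy * f y < pu * f u + pv * f v := by
  have huv : 0 < v - u := sub_pos.2 (hx.1.trans hx.2)
  have hfx := hf.mul_lt_chord hu hv hx.1 hx.2
  have hfy := hf.convexOn.mul_le_chord hu hv hy.1 hy.2
  refine lt_of_mul_lt_mul_left ?_ huv.le
  -- the chord through `(u, f u)` and `(v, f v)` is affine, so its average depends only on
  -- mass and mean
  calc (v - u) * (qx * f x + qy * f y)
      < qx * ((v - x) * f u + (x - u) * f v) + qy * ((v - y) * f u + (y - u) * f v) := by
        linarith [mul_lt_mul_of_pos_left hfx hqx, mul_le_mul_of_nonneg_left hfy hqy]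
    _ = (v - u) * (pu * f u + pv * f v) := by
        linear_combination (v * f u - u * f v) * hmass + (f v - f u) * hmean

lemma StrictConvexOn.mul_comp_div_add_mul_comp_div_lt (hf : StrictConvexOn ℝ s f)
    {p0 p1 q0 q1 x0 x1 y0 y1 : ℝ}
    (hp0 : 0 < p0) (hq0 : 0 < q0) (hx0 : 0 < x0) (hy0 : 0 < y0)
    (hp : p1 / p0 ∈ s) (hq : q1 / q0 ∈ s)
    (hx : x1 / x0 ∈ Ioo (p1 / p0) (q1 / q0)) (hy : y1 / y0 ∈ Icc (p1 / p0) (q1 / q0))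
    (h0 : x0 + y0 = p0 + q0) (h1 : x1 + y1 = p1 + q1) :
    x0 * f (x1 / x0) + y0 * f (y1 / y0) < p0 * f (p1 / p0) + q0 * f (q1 / q0) :=
  hf.mul_add_mul_lt_of_mem_Ioo_of_mem_Icc hp hq hx hy hx0 hy0.le h0 <| by
    rwa [mul_div_cancel₀ _ hx0.ne', mul_div_cancel₀ _ hy0.ne', mul_div_cancel₀ _ hp0.ne',
      mul_div_cancel₀ _ hq0.ne']

end TwoPoint

lemma mul_log_div_eq_mul_neg_log_div (x0 x1 : ℝ) :
    x0 * log (x0 / x1) = x0 * -log (x1 / x0) := by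
  rw [← log_inv, inv_div]

lemma mul_log_div_eq_mul_div_mul_log_div {x0 : ℝ} (hx0 : x0 ≠ 0) (x1 : ℝ) :
    x1 * log (x1 / x0) = x0 * (x1 / x0 * log (x1 / x0)) := by
  rw [← mul_assoc, mul_div_cancel₀ _ hx0]

theorem mul_log_div_add_mul_log_div_lt {p0 p1 q0 q1 x0 x1 y0 y1 : ℝ}
    (hp0 : 0 < p0) (hp1 : 0 < p1) (hq0 : 0 < q0) (hx0 : 0 < x0) (hy0 : 0 < y0)
    (hx : x1 / x0 ∈ Ioo (p1 / p0) (q1 / q0)) (hy : y1 / y0 ∈ Icc (p1 / p0) (q1 / q0))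
    (h0 : x0 + y0 = p0 + q0) (h1 : x1 + y1 = p1 + q1) :
    x0 * log (x0 / x1) + y0 * log (y0 / y1) < p0 * log (p0 / p1) + q0 * log (q0 / q1) ∧
    x1 * log (x1 / x0) + y1 * log (y1 / y0) < p1 * log (p1 / p0) + q1 * log (q1 / q0) := by
  have hp : p1 / p0 ∈ Ioi 0 := div_pos hp1 hp0
  have hq : q1 / q0 ∈ Ioi 0 := lt_trans hp (hx.1.trans hx.2)
  have hmul_log : StrictConvexOn ℝ (Ioi 0) fun t ↦ t * log t :=
    strictConvexOn_mul_log.subset Ioi_subset_Ici_self (convex_Ioi 0)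
  constructor
  · simpa only [mul_log_div_eq_mul_neg_log_div, Pi.neg_apply] using
      strictConcaveOn_log_Ioi.neg.mul_comp_div_add_mul_comp_div_lt hp0 hq0 hx0 hy0 hp hq hx hy
        h0 h1
  · simpa only [mul_log_div_eq_mul_div_mul_log_div hp0.ne',
      mul_log_div_eq_mul_div_mul_log_div hq0.ne', mul_log_div_eq_mul_div_mul_log_div hx0.ne',
      mul_log_div_eq_mul_div_mul_log_div hy0.ne'] using
      hmul_log.mul_comp_div_add_mul_comp_div_lt hp0 hq0 hx0 hy0 hp hq hx hy h0 h1

theorem stmt_0_general (a0 a1 b0 b1 c0 c1 : ℝ)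
    (ha0 : 0 < a0) (ha1 : 0 < a1) (hb0 : 0 < b0) (hb1 : 0 < b1)
    (hc0 : 0 < c0)
    (hab : a1 / a0 < b1 / b0) (hbc : b1 / b0 < c1 / c0) :
    (a0 * Real.log (a0 / a1) + (b0 + c0) * Real.log ((b0 + c0) / (b1 + c1)) >
       b0 * Real.log (b0 / b1) + (a0 + c0) * Real.log ((a0 + c0) / (a1 + c1)) ∧
     a1 * Real.log (a1 / a0) + (b1 + c1) * Real.log ((b1 + c1) / (b0 + c0)) >
       b1 * Real.log (b1 / b0) + (a1 + c1) * Real.log ((a1 + c1) / (a0 + c0))) ∨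
    (c0 * Real.log (c0 / c1) + (a0 + b0) * Real.log ((a0 + b0) / (a1 + b1)) >
       b0 * Real.log (b0 / b1) + (a0 + c0) * Real.log ((a0 + c0) / (a1 + c1)) ∧
     c1 * Real.log (c1 / c0) + (a1 + b1) * Real.log ((a1 + b1) / (a0 + b0)) >
       b1 * Real.log (b1 / b0) + (a1 + c1) * Real.log ((a1 + c1) / (a0 + c0))) := by
  have hac : a1 / a0 < c1 / c0 := hab.trans hbc
  rcases le_or_gt ((a1 + c1) / (a0 + c0)) ((b1 + c1) / (b0 + c0)) with hcase | hcase
  · left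
    exact mul_log_div_add_mul_log_div_lt ha0 ha1 (by positivity) hb0 (by positivity)
      ⟨hab, div_lt_add_div_add hb0 hc0 hbc⟩ ⟨(div_lt_add_div_add ha0 hc0 hac).le, hcase⟩
      (by ring) (by ring)
  · right
    obtain ⟨h0, h1⟩ := mul_log_div_add_mul_log_div_lt (by positivity) (by positivity) hc0 hb0
      (by positivity) ⟨add_div_add_lt_div ha0 hb0 hab, hbc⟩
      ⟨(add_div_add_lt_div ha0 hb0 hab |>.trans (div_lt_add_div_add hb0 hc0 hbc) |>.trans
        hcase).le, (add_div_add_lt_div ha0 hc0 hac).le⟩ (by ring) (by ring)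
    exact ⟨h0.trans_eq (add_comm _ _), h1.trans_eq (add_comm _ _)⟩

/-- Lemma 3 (re-quantization): for positive reals with ordered likelihood ratios,
at least one of two pairs of strict inequalities between unnormalized KL-type
quantities holds. -/
theorem stmt_0 (a0 a1 b0 b1 c0 c1 : ℝ)
    (ha0 : 0 < a0) (ha1 : 0 < a1) (hb0 : 0 < b0) (hb1 : 0 < b1)
    (hc0 : 0 < c0) (hc1 : 0 < c1)
    (hab : a1 / a0 < b1 / b0) (hbc : b1 / b0 < c1 / c0) :
    (a0 * Real.log (a0 / a1) + (b0 + c0) * Real.log ((b0 + c0) / (b1 + c1)) >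
       b0 * Real.log (b0 / b1) + (a0 + c0) * Real.log ((a0 + c0) / (a1 + c1)) ∧
     a1 * Real.log (a1 / a0) + (b1 + c1) * Real.log ((b1 + c1) / (b0 + c0)) >
       b1 * Real.log (b1 / b0) + (a1 + c1) * Real.log ((a1 + c1) / (a0 + c0))) ∨
    (c0 * Real.log (c0 / c1) + (a0 + b0) * Real.log ((a0 + b0) / (a1 + b1)) >
       b0 * Real.log (b0 / b1) + (a0 + c0) * Real.log ((a0 + c0) / (a1 + c1)) ∧
     c1 * Real.log (c1 / c0) + (a1 + b1) * Real.log ((a1 + b1) / (a0 + b0)) >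
       b1 * Real.log (b1 / b0) + (a1 + c1) * Real.log ((a1 + c1) / (a0 + c0))) :=
  stmt_0_general a0 a1 b0 b1 c0 c1 ha0 ha1 hb0 hb1 hc0 hab hbc
end

section
/- For positive reals a0,a1,b0,b1,c0,c1 with a1+b1+c1 = a0+b0+c0 = 1, b1 ≥ b0, and c1/c0 > b1/b0 > a1/a0, the inequality a1·log(a1/a0) + (b1+c1)·log((b1+c1)/(b0+c0)) > (a1+c1)·log((a1+c1)/(a0+c0)) + b1·log(b1/b0) holds. -/
/-!
Both sides are binary KL divergences: with `d x y = x log (x/y) + (1-x) log ((1-x)/(1-y))` the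
claim reads `d b1 b0 < d a1 a0 = d (1-a1) (1-a0)`. Joint convexity of the perspective
`(p, q) ↦ p log (p/q)` of `u ↦ u log u` yields two monotonicity properties of `d`: it does not
decrease when both arguments are multiplied by `t > 1`, and `d · y` is strictly increasing on
`[y, 1]`. Multiplying `(b1, b0)` by `t = (1-a0)/b0` lands on `(t b1, 1-a0)`, and
`1-a0 ≤ t b1 < 1-a1`, the right inequality being `c1/c0 > b1/b0`.
-/

open Real Set

theorem convexOn_mul_log_div :
    ConvexOn ℝ (Ici 0 ×ˢ Ioi 0) (fun z : ℝ × ℝ ↦ z.1 * log (z.1 / z.2)) := by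
  refine ⟨(convex_Ici 0).prod (convex_Ioi 0), ?_⟩
  rintro ⟨p, q⟩ ⟨hp, hq⟩ ⟨p', q'⟩ ⟨hp', hq'⟩ a b ha hb hab
  simp only [mem_Ici, mem_Ioi] at hp hq hp' hq'
  simp only [Prod.smul_mk, Prod.mk_add_mk, smul_eq_mul]
  have hQ : 0 < a * q + b * q' := convex_Ioi (0 : ℝ) hq hq' ha hb hab
  set Q := a * q + b * q'
  -- Jensen for `u ↦ u log u` at `p / q`, `p' / q'` with weights proportional to `a q`, `b q'`.
  have key := convexOn_mul_log.2 (mem_Ici.2 (div_nonneg hp hq.le))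
    (mem_Ici.2 (div_nonneg hp' hq'.le)) (show 0 ≤ a * q / Q by positivity)
    (show 0 ≤ b * q' / Q by positivity) (by rw [← add_div, div_self hQ.ne'])
  simp only [smul_eq_mul] at key
  calc (a * p + b * p') * log ((a * p + b * p') / Q)
      = Q * ((a * p + b * p') / Q * log ((a * p + b * p') / Q)) := by field_simp
    _ = Q * ((a * q / Q * (p / q) + b * q' / Q * (p' / q')) *
          log (a * q / Q * (p / q) + b * q' / Q * (p' / q'))) := by
        congr 3 <;> field_simp
    _ ≤ Q * (a * q / Q * (p / q * log (p / q)) + b * q' / Q * (p' / q' * log (p' / q'))) := by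
        gcongr
    _ = a * (p * log (p / q)) + b * (p' * log (p' / q')) := by field_simp

noncomputable def binaryKL (x y : ℝ) : ℝ :=
  x * log (x / y) + (1 - x) * log ((1 - x) / (1 - y))

@[simp]
theorem binaryKL_self (y : ℝ) : binaryKL y y = 0 := by
  simp [binaryKL]

theorem binaryKL_one_sub (x y : ℝ) : binaryKL (1 - x) (1 - y) = binaryKL x y := by
  simp only [binaryKL, sub_sub_cancel]
  ring

theorem binaryKL_pos {x y : ℝ} (hx₀ : 0 ≤ x) (hx₁ : x ≤ 1) (hy₀ : 0 < y) (hy₁ : y < 1)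
    (hxy : x ≠ y) : 0 < binaryKL x y := by
  have hy₁' : 0 < 1 - y := sub_pos.2 hy₁
  have hne : x / y ≠ (1 - x) / (1 - y) := by
    rw [Ne, div_eq_div_iff hy₀.ne' hy₁'.ne']
    contrapose! hxy
    linarith
  -- Strict Jensen for `u ↦ u log u` at `x / y`, `(1 - x) / (1 - y)` with weights `y`, `1 - y`.
  have key := strictConvexOn_mul_log.2 (mem_Ici.2 (div_nonneg hx₀ hy₀.le))
    (mem_Ici.2 (div_nonneg (sub_nonneg.2 hx₁) hy₁'.le)) hne hy₀ hy₁' (add_sub_cancel y 1)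
  simp only [smul_eq_mul, mul_div_cancel₀ _ hy₀.ne', mul_div_cancel₀ _ hy₁'.ne',
    add_sub_cancel, log_one, mul_zero] at key
  rwa [← mul_assoc, ← mul_assoc, mul_div_cancel₀ _ hy₀.ne', mul_div_cancel₀ _ hy₁'.ne'] at key

theorem binaryKL_nonneg {x y : ℝ} (hx₀ : 0 ≤ x) (hx₁ : x ≤ 1) (hy₀ : 0 < y) (hy₁ : y < 1) :
    0 ≤ binaryKL x y := by
  rcases eq_or_ne x y with rfl | hxy
  · simp
  · exact (binaryKL_pos hx₀ hx₁ hy₀ hy₁ hxy).le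

theorem convexOn_binaryKL_left {y : ℝ} (hy₀ : 0 < y) (hy₁ : y < 1) :
    ConvexOn ℝ (Icc 0 1) (binaryKL · y) := by
  refine ⟨convex_Icc 0 1, ?_⟩
  rintro x ⟨hx₀, hx₁⟩ x' ⟨hx₀', hx₁'⟩ a b ha hb hab
  have h₁ := convexOn_mul_log_div.2 (x := (x, y)) (y := (x', y)) ⟨hx₀, hy₀⟩ ⟨hx₀', hy₀⟩ ha hb hab
  have h₂ := convexOn_mul_log_div.2 (x := (1 - x, 1 - y)) (y := (1 - x', 1 - y))
    ⟨sub_nonneg.2 hx₁, sub_pos.2 hy₁⟩ ⟨sub_nonneg.2 hx₁', sub_pos.2 hy₁⟩ ha hb hab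
  simp only [Prod.smul_mk, Prod.mk_add_mk, smul_eq_mul, ← add_mul, hab, one_mul] at h₁ h₂
  simp only [binaryKL, smul_eq_mul]
  have : a * (1 - x) + b * (1 - x') = 1 - (a * x + b * x') := by linear_combination hab
  rw [this] at h₂
  linarith

theorem binaryKL_strictMonoOn_left {y : ℝ} (hy₀ : 0 < y) (hy₁ : y < 1) :
    StrictMonoOn (binaryKL · y) (Icc y 1) := by
  rintro x ⟨hyx, hx₁⟩ x' ⟨-, hx₁'⟩ hxx'
  have hpos : 0 < binaryKL x' y :=
    binaryKL_pos (hy₀.le.trans (hyx.trans hxx'.le)) hx₁' hy₀ hy₁ (hyx.trans_lt hxx').ne'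
  rcases hyx.eq_or_lt with rfl | hyx
  · simpa using hpos
  · refine (convexOn_binaryKL_left hy₀ hy₁).lt_right_of_left_lt ⟨hy₀.le, hy₁.le⟩
      ⟨by linarith, hx₁'⟩ ?_ ?_
    · rw [openSegment_eq_Ioo (hyx.trans hxx')]
      exact ⟨hyx, hxx'⟩
    · simpa using binaryKL_pos (hy₀.le.trans hyx.le) hx₁ hy₀ hy₁ hyx.ne'

theorem binaryKL_le_binaryKL_mul {x y t : ℝ} (ht : 1 < t) (hx₀ : 0 ≤ x) (htx : t * x ≤ 1)
    (hy₀ : 0 < y) (hty : t * y < 1) : binaryKL x y ≤ binaryKL (t * x) (t * y) := by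
  have ht₀ : 0 < t := one_pos.trans ht
  have ht_inv : t⁻¹ ≤ 1 := inv_le_one_of_one_le₀ ht.le
  have h_first : x * log (x / y) = t⁻¹ * (t * x * log (t * x / (t * y))) := by
    rw [mul_div_mul_left _ _ ht₀.ne']
    field_simp
  -- `(1 - x, 1 - y)` is the convex combination `t⁻¹ • (1 - t x, 1 - t y) + (1 - t⁻¹) • (1, 1)`.
  have h_second : (1 - x) * log ((1 - x) / (1 - y)) ≤
      t⁻¹ * ((1 - t * x) * log ((1 - t * x) / (1 - t * y))) := by
    have h := convexOn_mul_log_div.2 (x := (1 - t * x, 1 - t * y)) (y := (1, 1))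
      ⟨sub_nonneg.2 htx, sub_pos.2 hty⟩ (by norm_num) (inv_nonneg.2 ht₀.le)
      (sub_nonneg.2 ht_inv) (add_sub_cancel _ _)
    have h_comb (u : ℝ) : t⁻¹ * (1 - t * u) + (1 - t⁻¹) * 1 = 1 - u := by
      field_simp
      ring
    simpa only [Prod.smul_mk, Prod.mk_add_mk, smul_eq_mul, h_comb, div_one, log_one, mul_zero,
      add_zero] using h
  have h_nonneg : 0 ≤ binaryKL (t * x) (t * y) :=
    binaryKL_nonneg (by positivity) htx (by positivity) hty
  calc binaryKL x y ≤ t⁻¹ * binaryKL (t * x) (t * y) := by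
        simp only [binaryKL, mul_add]
        linarith
    _ ≤ binaryKL (t * x) (t * y) := mul_le_of_le_one_left h_nonneg ht_inv

theorem stmt_1_general (a0 a1 b0 b1 c0 c1 : ℝ)
    (ha0 : 0 < a0) (ha1 : 0 < a1) (hb0 : 0 < b0) (hb1 : 0 < b1)
    (hc0 : 0 < c0)
    (hsum1 : a1 + b1 + c1 = 1) (hsum0 : a0 + b0 + c0 = 1)
    (hb : b1 ≥ b0)
    (hcb : c1 / c0 > b1 / b0) :
    a1 * Real.log (a1 / a0) + (b1 + c1) * Real.log ((b1 + c1) / (b0 + c0)) >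
      (a1 + c1) * Real.log ((a1 + c1) / (a0 + c0)) + b1 * Real.log (b1 / b0) := by
  rw [show b1 + c1 = 1 - a1 by linarith, show b0 + c0 = 1 - a0 by linarith,
    show a1 + c1 = 1 - b1 by linarith, show a0 + c0 = 1 - b0 by linarith, add_comm _ (b1 * _)]
  change binaryKL b1 b0 < binaryKL a1 a0
  set t := (1 - a0) / b0
  have ht : 1 < t := (one_lt_div hb0).2 (by linarith)
  have htb0 : t * b0 = 1 - a0 := div_mul_cancel₀ _ hb0.ne'
  have htb1_le : 1 - a0 ≤ t * b1 := htb0 ▸ mul_le_mul_of_nonneg_left hb (by positivity)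
  have htb1_lt : t * b1 < 1 - a1 := by
    rw [gt_iff_lt, div_lt_div_iff₀ hb0 hc0] at hcb
    rw [div_mul_eq_mul_div, div_lt_iff₀ hb0]
    linear_combination hcb + b0 * hsum1 - b1 * hsum0
  calc binaryKL b1 b0 ≤ binaryKL (t * b1) (t * b0) :=
        binaryKL_le_binaryKL_mul ht hb1.le (by linarith) hb0 (by linarith)
    _ < binaryKL (1 - a1) (1 - a0) := by
        rw [htb0]
        exact binaryKL_strictMonoOn_left (by linarith) (by linarith) ⟨htb1_le, by linarith⟩
          ⟨by linarith, by linarith⟩ htb1_lt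
    _ = binaryKL a1 a0 := binaryKL_one_sub a1 a0

/-- Normalized key step: merging `a` with `c` strictly decreases the
unnormalized KL divergence `D̃1` compared to keeping `a` separate. -/
theorem stmt_1 (a0 a1 b0 b1 c0 c1 : ℝ)
    (ha0 : 0 < a0) (ha1 : 0 < a1) (hb0 : 0 < b0) (hb1 : 0 < b1)
    (hc0 : 0 < c0) (hc1 : 0 < c1)
    (hsum1 : a1 + b1 + c1 = 1) (hsum0 : a0 + b0 + c0 = 1)
    (hb : b1 ≥ b0)
    (hcb : c1 / c0 > b1 / b0) (hba : b1 / b0 > a1 / a0) :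
    a1 * Real.log (a1 / a0) + (b1 + c1) * Real.log ((b1 + c1) / (b0 + c0)) >
      (a1 + c1) * Real.log ((a1 + c1) / (a0 + c0)) + b1 * Real.log (b1 / b0) :=
  stmt_1_general a0 a1 b0 b1 c0 c1 ha0 ha1 hb0 hb1 hc0 hsum1 hsum0 hb hcb
end

section
/- Let f(x,y) = x·log(x/y) + (1-x)·log((1-x)/(1-y)) on (0,1)² with x ≠ y. Then f_xx · f_y² + f_yy · f_x² ≥ 2·f_x·f_y·f_xy, with strict inequality when x ≠ y, where subscripts denote partial derivatives. -/
/-- For the binary KL divergence `f(x,y)` with partial derivatives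
`f_x = log(x/y) - log((1-x)/(1-y))`, `f_y = (1-x)/(1-y) - x/y`,
`f_xx = 1/(x(1-x))`, `f_yy = (1-x)/(1-y)² + x/y²`, `f_xy = -1/(y(1-y))`,
we have `f_xx f_y² + f_yy f_x² > 2 f_x f_y f_xy` whenever `x ≠ y` in (0,1)². -/
theorem stmt_3 (x y : ℝ) (hx : x ∈ Set.Ioo (0:ℝ) 1) (hy : y ∈ Set.Ioo (0:ℝ) 1)
    (hxy : x ≠ y) :
    (1 / (x * (1 - x))) * ((1 - x) / (1 - y) - x / y) ^ 2 +
      ((1 - x) / (1 - y) ^ 2 + x / y ^ 2) *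
        (Real.log (x / y) - Real.log ((1 - x) / (1 - y))) ^ 2 >
    2 * (Real.log (x / y) - Real.log ((1 - x) / (1 - y))) *
      ((1 - x) / (1 - y) - x / y) * (-(1 / (y * (1 - y)))) := by
  obtain ⟨hx0, hx1⟩ := hx
  obtain ⟨hy0, hy1⟩ := hy
  have h1x : 0 < 1 - x := by linarith
  have h1y : 0 < 1 - y := by linarith
  have hd : x ≠ y → (y - x) ≠ 0 := fun h => sub_ne_zero.mpr (Ne.symm h)
  have hyx : (y - x) ≠ 0 := hd hxy
  set u := Real.log (x / y) - Real.log ((1 - x) / (1 - y)) with hu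
  have key : 0 < (y - x)^2 + ((1-x)*y^2 + x*(1-y)^2) * (x*(1-x)) * u^2
      + 2*u*(y-x)*(x*(1-x)) := by
    rcases eq_or_ne u 0 with h | h
    · rw [h]
      have : 0 < (y - x)^2 := by positivity
      nlinarith
    · have h1 : 0 < (x - y)^2 * (x*(1-x)) * u^2 := by
        have : (x - y) ≠ 0 := sub_ne_zero.mpr hxy
        positivity
      nlinarith [sq_nonneg ((y - x) + x*(1-x)*u)]
  rw [gt_iff_lt, ← sub_pos]
  have heq : (1 / (x * (1 - x))) * ((1 - x) / (1 - y) - x / y) ^ 2 +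
      ((1 - x) / (1 - y) ^ 2 + x / y ^ 2) * u ^ 2 -
      2 * u * ((1 - x) / (1 - y) - x / y) * (-(1 / (y * (1 - y)))) =
      ((y - x)^2 + ((1-x)*y^2 + x*(1-y)^2) * (x*(1-x)) * u^2
        + 2*u*(y-x)*(x*(1-x))) / (x*(1-x)*y^2*(1-y)^2) := by
    field_simp
    ring
  rw [heq]
  positivity
end

section
/- For positive reals u ≠ v: 3(v-u)/(2√(uv) + (u+v)/2) < log v - log u < (v-u)/((uv(u+v)/2)^(1/3)), assuming u < v. -/
/-!
Put `x = (log v - log u) / 2` and `w = √(uv)`; then `v - u = 2w sinh x` and `u + v = 2w cosh x`,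
so the two bounds become `3 sinh x < x (cosh x + 2)` and `x cosh^{1/3} x < sinh x` for `x > 0`.
Both differences vanish at `0` and have positive derivative on `(0, ∞)`: it is
`((cosh x - 1) / (cosh x + 2))²` for the first, and `(r² - 1)² (2r² + 1) / (3r⁴)` with
`r = cosh^{1/3} x > 1` for the second.
-/

open Real

lemma pos_of_hasDerivAt_of_deriv_pos {f f' : ℝ → ℝ} (hf : ∀ x, HasDerivAt f (f' x) x)
    (h₀ : f 0 = 0) (hf' : ∀ x, 0 < x → 0 < f' x) {x : ℝ} (hx : 0 < x) : 0 < f x := by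
  have hmono : StrictMonoOn f (Set.Ici 0) := by
    refine strictMonoOn_of_hasDerivWithinAt_pos (convex_Ici 0)
      (fun y _ ↦ (hf y).continuousAt.continuousWithinAt) (fun y _ ↦ (hf y).hasDerivWithinAt) ?_
    rw [interior_Ici]
    exact hf'
  simpa [h₀] using hmono Set.self_mem_Ici hx.le hx

lemma three_mul_sinh_lt {x : ℝ} (hx : 0 < x) : 3 * sinh x < x * (cosh x + 2) := by
  have hc : ∀ y, 0 < cosh y + 2 := fun y ↦ by linarith [cosh_pos y]
  suffices 0 < x - 3 * sinh x / (cosh x + 2) by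
    rw [sub_pos, div_lt_iff₀ (hc x)] at this
    linarith
  refine pos_of_hasDerivAt_of_deriv_pos (f := fun y ↦ y - 3 * sinh y / (cosh y + 2))
    (f' := fun y ↦ ((cosh y - 1) / (cosh y + 2)) ^ 2) (fun y ↦ ?_) (by simp)
    (fun y hy ↦ pow_pos (div_pos (by linarith [one_lt_cosh.2 hy.ne']) (hc y)) 2) hx
  refine ((hasDerivAt_id' y).sub (((hasDerivAt_sinh y).const_mul 3).div
    ((hasDerivAt_cosh y).add_const 2) (hc y).ne')).congr_deriv ?_
  field_simp
  linear_combination (-3) * cosh_sq y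

lemma rpow_one_third_pow_three {a : ℝ} (ha : 0 ≤ a) : (a ^ (1 / 3 : ℝ)) ^ 3 = a := by
  rw [← rpow_natCast, ← rpow_mul ha]; norm_num

lemma pow_three_rpow_one_third {a : ℝ} (ha : 0 ≤ a) : (a ^ 3) ^ (1 / 3 : ℝ) = a := by
  simpa using pow_rpow_inv_natCast ha three_ne_zero

lemma mul_cosh_rpow_one_third_lt_sinh {x : ℝ} (hx : 0 < x) :
    x * cosh x ^ (1 / 3 : ℝ) < sinh x := by
  have hr_pos : ∀ y, 0 < cosh y ^ (1 / 3 : ℝ) := fun y ↦ rpow_pos_of_pos (cosh_pos y) _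
  suffices 0 < sinh x / cosh x ^ (1 / 3 : ℝ) - x by
    rwa [sub_pos, lt_div_iff₀ (hr_pos x)] at this
  refine pos_of_hasDerivAt_of_deriv_pos (f := fun y ↦ sinh y / cosh y ^ (1 / 3 : ℝ) - y)
    (f' := fun y ↦ ((cosh y ^ (1 / 3 : ℝ)) ^ 2 - 1) ^ 2 * (2 * (cosh y ^ (1 / 3 : ℝ)) ^ 2 + 1) /
      (3 * (cosh y ^ (1 / 3 : ℝ)) ^ 4)) (fun y ↦ ?_) (by simp) (fun y hy ↦ ?_) hx
  · refine (((hasDerivAt_sinh y).div ((hasDerivAt_cosh y).rpow_const (Or.inl (cosh_pos y).ne'))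
      (hr_pos y).ne').sub (hasDerivAt_id' y)).congr_deriv ?_
    rw [rpow_sub (cosh_pos y), rpow_one]
    have hr := hr_pos y
    have hcosh := rpow_one_third_pow_three (cosh_pos y).le
    set r := cosh y ^ (1 / 3 : ℝ)
    have hsinh_sq : sinh y ^ 2 = r ^ 6 - 1 := by rw [sinh_sq, ← hcosh]; ring
    rw [← hcosh]
    field_simp
    linear_combination -hsinh_sq
  · have hr_gt : 1 < cosh y ^ (1 / 3 : ℝ) := one_lt_rpow (one_lt_cosh.2 hy.ne') (by norm_num)
    have : 0 < (cosh y ^ (1 / 3 : ℝ)) ^ 2 - 1 := by nlinarith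
    positivity

lemma half_log_sub_log_eq {u v : ℝ} (hu : 0 ≤ u) (hv : 0 ≤ v) :
    (log v - log u) / 2 = log √v - log √u := by
  rw [log_sqrt hv, log_sqrt hu]; ring

lemma two_mul_sqrt_mul_sinh_half_log_sub_log {u v : ℝ} (hu : 0 < u) (hv : 0 < v) :
    2 * √(u * v) * sinh ((log v - log u) / 2) = v - u := by
  rw [half_log_sub_log_eq hu.le hv.le, sinh_eq, exp_neg, exp_sub, exp_log (sqrt_pos.2 hu),
    exp_log (sqrt_pos.2 hv), sqrt_mul hu.le]
  field_simp
  rw [sq_sqrt hu.le, sq_sqrt hv.le]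

lemma two_mul_sqrt_mul_cosh_half_log_sub_log {u v : ℝ} (hu : 0 < u) (hv : 0 < v) :
    2 * √(u * v) * cosh ((log v - log u) / 2) = u + v := by
  rw [half_log_sub_log_eq hu.le hv.le, cosh_eq, exp_neg, exp_sub, exp_log (sqrt_pos.2 hu),
    exp_log (sqrt_pos.2 hv), sqrt_mul hu.le]
  field_simp
  rw [sq_sqrt hu.le, sq_sqrt hv.le]; ring

/-- Two-sided bound on the logarithmic mean:
`3(v-u)/(2√(uv) + (u+v)/2) < log v - log u < (v-u)/(uv(u+v)/2)^(1/3)` for `0 < u < v`. -/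
theorem stmt_6 (u v : ℝ) (hu : 0 < u) (huv : u < v) :
    3 * (v - u) / (2 * Real.sqrt (u * v) + (u + v) / 2) < Real.log v - Real.log u ∧
    Real.log v - Real.log u < (v - u) / ((u * v * (u + v) / 2) ^ ((1:ℝ) / 3)) := by
  have hv : 0 < v := hu.trans huv
  obtain ⟨x, hx_eq⟩ : ∃ x, log v - log u = 2 * x := ⟨(log v - log u) / 2, by ring⟩
  have hx : 0 < x := by linarith [log_lt_log hu huv]
  have hsinh := two_mul_sqrt_mul_sinh_half_log_sub_log hu hv
  have hcosh := two_mul_sqrt_mul_cosh_half_log_sub_log hu hv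
  rw [hx_eq, mul_div_cancel_left₀ x two_ne_zero] at hsinh hcosh
  rw [hx_eq]
  have hw : 0 < √(u * v) := sqrt_pos.2 (mul_pos hu hv)
  have hw_sq : √(u * v) ^ 2 = u * v := sq_sqrt (mul_pos hu hv).le
  generalize √(u * v) = w at hsinh hcosh hw hw_sq ⊢
  have hmean : (u * v * (u + v) / 2) ^ (1 / 3 : ℝ) = w * cosh x ^ (1 / 3 : ℝ) := by
    rw [← pow_three_rpow_one_third (mul_pos hw (rpow_pos_of_pos (cosh_pos x) _)).le, mul_pow,
      rpow_one_third_pow_three (cosh_pos x).le, ← hcosh, ← hw_sq]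
    ring_nf
  constructor
  · rw [div_lt_iff₀ (by positivity)]
    calc 3 * (v - u) = 2 * w * (3 * sinh x) := by rw [← hsinh]; ring
      _ < 2 * w * (x * (cosh x + 2)) :=
        mul_lt_mul_of_pos_left (three_mul_sinh_lt hx) (by positivity)
      _ = 2 * x * (2 * w + (u + v) / 2) := by rw [← hcosh]; ring
  · rw [hmean, lt_div_iff₀ (by positivity)]
    calc 2 * x * (w * cosh x ^ (1 / 3 : ℝ)) = 2 * w * (x * cosh x ^ (1 / 3 : ℝ)) := by ring
      _ < 2 * w * sinh x :=
        mul_lt_mul_of_pos_left (mul_cosh_rpow_one_third_lt_sinh hx) (by positivity)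
      _ = v - u := hsinh
end

section
/- For u, v positive with u ≤ 1 ≤ v: ((u+v)/2 + 2√(uv))·((u+v)/2 + 3√(uv) + 4uv)·(3·(v(v+1)/2)^(1/3) - (2√u + (u+1)/2)) ≥ (2√u + (u+1)/2)·(v(v+1)/2)^(1/3)·((u+v)/2 + 5√(uv))·(v-u), with equality iff u = v = 1. -/
set_option maxHeartbeats 2000000

private lemma aux_b1 (s t : ℝ) (hs : 0 ≤ s) (ht : 1 ≤ t) :
    0 < 3 * (((s^2 + t^2)/2 + 2*(s*t)) * ((s^2 + t^2)/2 + 3*(s*t) + 4*(s^2*t^2)))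
        - (2*s + (s^2+1)/2) * ((s^2 + t^2)/2 + 5*(s*t)) * t * (t+1) := by
  have hb : 0 ≤ t - 1 := by linarith
  linarith [mul_nonneg (pow_nonneg hs 0) (pow_nonneg hb 1), mul_nonneg (pow_nonneg hs 0) (pow_nonneg hb 2), mul_nonneg (pow_nonneg hs 0) (pow_nonneg hb 3), mul_nonneg (pow_nonneg hs 1) (pow_nonneg hb 0), mul_nonneg (pow_nonneg hs 1) (pow_nonneg hb 1), mul_nonneg (pow_nonneg hs 1) (pow_nonneg hb 2), mul_nonneg (pow_nonneg hs 2) (pow_nonneg hb 0), mul_nonneg (pow_nonneg hs 2) (pow_nonneg hb 1), mul_nonneg (pow_nonneg hs 2) (pow_nonneg hb 2), mul_nonneg (pow_nonneg hs 2) (pow_nonneg hb 3), mul_nonneg (pow_nonneg hs 3) (pow_nonneg hb 0), mul_nonneg (pow_nonneg hs 3) (pow_nonneg hb 1), mul_nonneg (pow_nonneg hs 3) (pow_nonneg hb 2), mul_nonneg (pow_nonneg hs 3) (pow_nonneg hb 3), mul_nonneg (pow_nonneg hs 4) (pow_nonneg hb 0), mul_nonneg (pow_nonneg hs 4) (pow_nonneg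 hb 1), mul_nonneg (pow_nonneg hs 4) (pow_nonneg hb 2), mul_nonneg (pow_nonneg hs 2) (pow_nonneg hb 4),
    mul_nonneg (sq_nonneg (1-s)) (pow_nonneg hb 4)]

private lemma aux_b2 (s t : ℝ) (hs : 0 ≤ s) (ht : 1 ≤ t) :
    0 < (((s^2 + t^2)/2 + 2*(s*t)) * ((s^2 + t^2)/2 + 3*(s*t) + 4*(s^2*t^2))) * (5+s)/2
        - (2*s + (s^2+1)/2) * ((s^2 + t^2)/2 + 5*(s*t)) * t * (1+s) := by
  have hb : 0 ≤ t - 1 := by linarith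
  linarith [mul_nonneg (pow_nonneg hs 0) (pow_nonneg hb 1), mul_nonneg (pow_nonneg hs 0) (pow_nonneg hb 2), mul_nonneg (pow_nonneg hs 0) (pow_nonneg hb 3), mul_nonneg (pow_nonneg hs 0) (pow_nonneg hb 4), mul_nonneg (pow_nonneg hs 1) (pow_nonneg hb 0), mul_nonneg (pow_nonneg hs 1) (pow_nonneg hb 1), mul_nonneg (pow_nonneg hs 1) (pow_nonneg hb 2), mul_nonneg (pow_nonneg hs 1) (pow_nonneg hb 3), mul_nonneg (pow_nonneg hs 1) (pow_nonneg hb 4), mul_nonneg (pow_nonneg hs 2) (pow_nonneg hb 0), mul_nonneg (pow_nonneg hs 2) (pow_nonneg hb 1), mul_nonneg (pow_nonneg hs 2) (pow_nonneg hb 2), mul_nonneg (pow_nonneg hs 2) (pow_nonneg hb 3), mul_nonneg (pow_nonneg hs 2) (pow_nonneg hb 4), mul_nonneg (pow_nonneg hs 3) (pow_nonneg hb 0), mul_nonneg (pow_nonneg hs 3) (pow_nonneg hb 1), mul_nonneg (pow_nonneg hs 3) (pow_nonneg hb 2), mul_nonneg (pow_nonneg hs 3) (pow_nonneg hb 3),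 mul_nonneg (pow_nonneg hs 3) (pow_nonneg hb 4), mul_nonneg (pow_nonneg hs 4) (pow_nonneg hb 0), mul_nonneg (pow_nonneg hs 4) (pow_nonneg hb 1), mul_nonneg (pow_nonneg hs 4) (pow_nonneg hb 2), mul_nonneg (pow_nonneg hs 4) (pow_nonneg hb 3), mul_nonneg (pow_nonneg hs 4) (pow_nonneg hb 4), mul_nonneg (pow_nonneg hs 5) (pow_nonneg hb 0), mul_nonneg (pow_nonneg hs 5) (pow_nonneg hb 1), mul_nonneg (pow_nonneg hs 5) (pow_nonneg hb 2)]

/-- The final algebraic inequality in the quasiconcavity proof, for `u ≤ 1 ≤ v`,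
with equality iff `u = v = 1`. -/
theorem stmt_7 (u v : ℝ) (hu0 : 0 < u) (hu : u ≤ 1) (hv : 1 ≤ v) :
    ((u + v) / 2 + 2 * Real.sqrt (u * v)) *
        ((u + v) / 2 + 3 * Real.sqrt (u * v) + 4 * (u * v)) *
        (3 * (v * (v + 1) / 2) ^ ((1:ℝ) / 3) - (2 * Real.sqrt u + (u + 1) / 2)) ≥
      (2 * Real.sqrt u + (u + 1) / 2) * (v * (v + 1) / 2) ^ ((1:ℝ) / 3) *
        ((u + v) / 2 + 5 * Real.sqrt (u * v)) * (v - u) ∧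
    (((u + v) / 2 + 2 * Real.sqrt (u * v)) *
        ((u + v) / 2 + 3 * Real.sqrt (u * v) + 4 * (u * v)) *
        (3 * (v * (v + 1) / 2) ^ ((1:ℝ) / 3) - (2 * Real.sqrt u + (u + 1) / 2)) =
      (2 * Real.sqrt u + (u + 1) / 2) * (v * (v + 1) / 2) ^ ((1:ℝ) / 3) *
        ((u + v) / 2 + 5 * Real.sqrt (u * v)) * (v - u) ↔ u = 1 ∧ v = 1) := by
  have hv0 : (0:ℝ) < v := lt_of_lt_of_le one_pos hv
  set s := Real.sqrt u with hsdef
  set t := Real.sqrt v with htdef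
  set w := (v * (v + 1) / 2) ^ ((1:ℝ) / 3) with hwdef
  have hs0 : 0 < s := Real.sqrt_pos.2 hu0
  have ht0 : 0 < t := Real.sqrt_pos.2 hv0
  have hs1 : s ≤ 1 := by
    rw [hsdef, show (1:ℝ) = Real.sqrt 1 by rw [Real.sqrt_one]]
    exact Real.sqrt_le_sqrt hu
  have ht1 : 1 ≤ t := by
    rw [htdef, show (1:ℝ) = Real.sqrt 1 by rw [Real.sqrt_one]]
    exact Real.sqrt_le_sqrt hv
  have hus : s ^ 2 = u := Real.sq_sqrt hu0.le
  have hvt : t ^ 2 = v := Real.sq_sqrt hv0.le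
  have hst : Real.sqrt (u * v) = s * t := Real.sqrt_mul hu0.le v
  have htw : t ≤ w := by
    have h3 : (t:ℝ) ^ (3:ℕ) ≤ v * (v + 1) / 2 := by
      rw [← hvt]
      nlinarith [mul_nonneg (sq_nonneg t) (sq_nonneg (t - 1))]
    have ht3 : t = ((t ^ (3:ℕ) : ℝ)) ^ ((1:ℝ)/3) := by
      rw [← Real.rpow_natCast t 3, ← Real.rpow_mul ht0.le]
      norm_num
    rw [ht3, hwdef]
    exact Real.rpow_le_rpow (by positivity) h3 (by norm_num)
  rw [hst, ← hus, ← hvt]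
  have hb1 := aux_b1 s t hs0.le ht1
  have hb2 := aux_b2 s t hs0.le ht1
  have hABc : 0 < ((s^2 + t^2)/2 + 2*(s*t)) * ((s^2 + t^2)/2 + 3*(s*t) + 4*(s^2*t^2)) * (2*s + (s^2+1)/2) := by positivity
  have hQpos : 0 < (3 * (((s^2 + t^2)/2 + 2*(s*t)) * ((s^2 + t^2)/2 + 3*(s*t) + 4*(s^2*t^2))) - (2*s + (s^2+1)/2) * ((s^2 + t^2)/2 + 5*(s*t)) * (t^2 - s^2)) := by
    have hid : t * (3 * (((s^2 + t^2)/2 + 2*(s*t)) * ((s^2 + t^2)/2 + 3*(s*t) + 4*(s^2*t^2))) - (2*s + (s^2+1)/2) * ((s^2 + t^2)/2 + 5*(s*t)) * (t^2 - s^2)) = (t - 1) * (3 * (((s^2 + t^2)/2 + 2*(s*t)) * ((s^2 + t^2)/2 + 3*(s*t) + 4*(s^2*t^2))) - (2*s + (s^2+1)/2) * ((s^2 + t^2)/2 + 5*(s*t)) * t * (t+1)) + (1 - s) * (((s^2 + t^2)/2 + 2*(s*t)) * ((s^2 + t^2)/2 + 3*(s*t) + 4*(s^2*t^2)) * (5+s)/2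 - (2*s + (s^2+1)/2) * ((s^2 + t^2)/2 + 5*(s*t)) * t * (1+s)) + ((s^2 + t^2)/2 + 2*(s*t)) * ((s^2 + t^2)/2 + 3*(s*t) + 4*(s^2*t^2)) * (2*s + (s^2+1)/2) := by ring
    nlinarith [mul_nonneg (sub_nonneg.2 ht1) hb1.le, mul_nonneg (sub_nonneg.2 hs1) hb2.le,
      hABc, hid, ht0, ht1]
  have hkey : ((s^2 + t^2) / 2 + 2 * (s * t)) *
        ((s^2 + t^2) / 2 + 3 * (s * t) + 4 * (s^2 * t^2)) *
        (3 * w - (2 * s + (s^2 + 1) / 2)) -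
      (2 * s + (s^2 + 1) / 2) * w * ((s^2 + t^2) / 2 + 5 * (s * t)) * (t^2 - s^2)
      = (w - t) * (3 * (((s^2 + t^2)/2 + 2*(s*t)) * ((s^2 + t^2)/2 + 3*(s*t) + 4*(s^2*t^2))) - (2*s + (s^2+1)/2) * ((s^2 + t^2)/2 + 5*(s*t)) * (t^2 - s^2)) + ((t - 1) * (3 * (((s^2 + t^2)/2 + 2*(s*t)) * ((s^2 + t^2)/2 + 3*(s*t) + 4*(s^2*t^2))) - (2*s + (s^2+1)/2) * ((s^2 + t^2)/2 + 5*(s*t)) * t * (t+1)) + (1 - s) * (((s^2 + t^2)/2 + 2*(s*t)) * ((s^2 + t^2)/2 + 3*(s*t) + 4*(s^2*t^2)) * (5+s)/2 - (2*s + (s^2+1)/2) * ((s^2 + t^2)/2 + 5*(s*t)) * t * (1+s))) := by ring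
  have hterm1 : 0 ≤ (w - t) * (3 * (((s^2 + t^2)/2 + 2*(s*t)) * ((s^2 + t^2)/2 + 3*(s*t) + 4*(s^2*t^2))) - (2*s + (s^2+1)/2) * ((s^2 + t^2)/2 + 5*(s*t)) * (t^2 - s^2)) := mul_nonneg (by linarith) hQpos.le
  have hterm2 : 0 ≤ (t - 1) * (3 * (((s^2 + t^2)/2 + 2*(s*t)) * ((s^2 + t^2)/2 + 3*(s*t) + 4*(s^2*t^2))) - (2*s + (s^2+1)/2) * ((s^2 + t^2)/2 + 5*(s*t)) * t * (t+1)) := mul_nonneg (by linarith) hb1.le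
  have hterm3 : 0 ≤ (1 - s) * (((s^2 + t^2)/2 + 2*(s*t)) * ((s^2 + t^2)/2 + 3*(s*t) + 4*(s^2*t^2)) * (5+s)/2 - (2*s + (s^2+1)/2) * ((s^2 + t^2)/2 + 5*(s*t)) * t * (1+s)) := mul_nonneg (by linarith) hb2.le
  constructor
  · linarith [hkey, hterm1, hterm2, hterm3]
  constructor
  · intro heq
    have h0 : (w - t) * (3 * (((s^2 + t^2)/2 + 2*(s*t)) * ((s^2 + t^2)/2 + 3*(s*t) + 4*(s^2*t^2))) - (2*s + (s^2+1)/2) * ((s^2 + t^2)/2 + 5*(s*t)) * (t^2 - s^2)) + ((t - 1) * (3 * (((s^2 + t^2)/2 + 2*(s*t)) * ((s^2 + t^2)/2 + 3*(s*t) + 4*(s^2*t^2))) - (2*s + (s^2+1)/2) * ((s^2 + t^2)/2 + 5*(s*t)) * t * (t+1)) + (1 - s) * (((s^2 + t^2)/2 + 2*(s*t)) * ((s^2 + t^2)/2 + 3*(s*t) + 4*(s^2*t^2)) * (5+s)/2 - (2*s + (s^2+1)/2) * ((s^2 + t^2)/2 + 5*(s*t)) * t * (1+s))) = 0 := by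
      linarith [hkey]
    have hteq : t = 1 := by
      by_contra h
      have ht' : 1 < t := lt_of_le_of_ne ht1 (Ne.symm h)
      nlinarith [mul_pos (sub_pos.2 ht') hb1, hterm1, hterm3]
    have hseq : s = 1 := by
      by_contra h
      have hs' : s < 1 := lt_of_le_of_ne hs1 h
      nlinarith [mul_pos (sub_pos.2 hs') hb2, hterm1, hterm2]
    rw [hseq, hteq]; norm_num
  · rintro ⟨h1, h2⟩
    have hseq : s = 1 := by nlinarith [hs0]
    have hteq : t = 1 := by nlinarith [ht0]
    have hveq : v = 1 := by rw [← hvt, hteq]; norm_num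
    have hweq : w = 1 := by
      rw [hwdef, hveq]; norm_num [Real.one_rpow]
    rw [hseq, hteq, hweq]; ring
end

section
/- Let D0_1, D0_2, D1_1, D1_2 be positive reals with D0_1 < D0_2 and D1_1 > D1_2 (the KL divergences of two quantizers under each hypothesis). Define G1(r) = r/D0_1 + 1/D1_1, G2(r) = r/D0_2 + 1/D1_2, and G12(r) = 2r/(D0_1+D0_2) + 2/(D1_1+D1_2) for r > 0 (r = π0/π1). Then there exist 0 < U < V (given explicitly by U = D0_1(D1_1-D1_2)(D0_1+D0_2) / (D1_1(D1_1+D1_2)(D0_2-D0_1)) and V = D0_2(D1_1-D1_2)(D0_1+D0_2) / (D1_2(D1_1+D1_2)(D0_2-D0_1))) such that for all r ∈ (U,V), G12(r) < min(G1(r), G2(r)). -/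
/-- The alternating design strictly beats both stationary designs on (U,V). -/
theorem stmt_8 (D01 D02 D11 D12 : ℝ)
    (h01 : 0 < D01) (h02 : 0 < D02) (h11 : 0 < D11) (h12 : 0 < D12)
    (h0 : D01 < D02) (h1 : D11 > D12) :
    0 < D01 * (D11 - D12) * (D01 + D02) / (D11 * (D11 + D12) * (D02 - D01)) ∧
    D01 * (D11 - D12) * (D01 + D02) / (D11 * (D11 + D12) * (D02 - D01)) <
      D02 * (D11 - D12) * (D01 + D02) / (D12 * (D11 + D12) * (D02 - D01)) ∧
    ∀ r : ℝ,
      D01 * (D11 - D12) * (D01 + D02) / (D11 * (D11 + D12) * (D02 - D01)) < r →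
      r < D02 * (D11 - D12) * (D01 + D02) / (D12 * (D11 + D12) * (D02 - D01)) →
      2 * r / (D01 + D02) + 2 / (D11 + D12) <
        min (r / D01 + 1 / D11) (r / D02 + 1 / D12) := by
  have hd0 : 0 < D02 - D01 := by linarith
  have hd1 : 0 < D11 - D12 := by linarith
  refine ⟨by positivity, ?_, ?_⟩
  · rw [div_lt_div_iff₀ (by positivity) (by positivity)]
    have hc : 0 < D02 * D11 - D01 * D12 := by nlinarith
    nlinarith [mul_pos (mul_pos (mul_pos hd1 (by positivity : (0:ℝ) < D01 + D02))
      (mul_pos (by positivity : (0:ℝ) < D11 + D12) hd0)) hc]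
  · intro r hU hV
    have hr : 0 < r := lt_trans (by positivity) hU
    have hU' : D01 * (D11 - D12) * (D01 + D02) < r * (D11 * (D11 + D12) * (D02 - D01)) :=
      (div_lt_iff₀ (by positivity)).mp hU
    have hV' : r * (D12 * (D11 + D12) * (D02 - D01)) < D02 * (D11 - D12) * (D01 + D02) :=
      (lt_div_iff₀ (by positivity)).mp hV
    rw [lt_min_iff]
    constructor
    · have e1 : r / D01 - 2 * r / (D01 + D02) = r * (D02 - D01) / (D01 * (D01 + D02)) := by
        field_simp; ring
      have e2 : 2 / (D11 + D12) - 1 / D11 = (D11 - D12) / (D11 * (D11 + D12)) := by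
        field_simp; ring
      have key : (D11 - D12) / (D11 * (D11 + D12)) < r * (D02 - D01) / (D01 * (D01 + D02)) := by
        rw [div_lt_div_iff₀ (by positivity) (by positivity)]
        nlinarith [hU']
      linarith
    · have e1 : 2 * r / (D01 + D02) - r / D02 = r * (D02 - D01) / (D02 * (D01 + D02)) := by
        field_simp; ring
      have e2 : 1 / D12 - 2 / (D11 + D12) = (D11 - D12) / (D12 * (D11 + D12)) := by
        field_simp; ring
      have key : r * (D02 - D01) / (D02 * (D01 + D02)) < (D11 - D12) / (D12 * (D11 + D12)) := by
        rw [div_lt_div_iff₀ (by positivity) (by positivity)]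
        nlinarith [hV']
      linarith
end

section
/- With notation as above (D0_1 < D0_2, D1_1 > D1_2, all positive), define δ = D0_1·D0_2·(D1_2 - D1_1) / (D1_1·D1_2·(D0_1 - D0_2)). Then δ > 0, G1(δ) = G2(δ), and δ ∈ (U, V) where U and V are the endpoints defined by U = D0_1(D1_1-D1_2)(D0_1+D0_2)/(D1_1(D1_1+D1_2)(D0_2-D0_1)) and V = D0_2(D1_1-D1_2)(D0_1+D0_2)/(D1_2(D1_1+D1_2)(D0_2-D0_1)). -/
/-!
Both stationary costs are affine in the prior ratio `r`, so they cross where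
`r (1/D0_1 - 1/D0_2) = 1/D1_2 - 1/D1_1`. Writing `c = (D1_1 - D1_2)/(D0_2 - D0_1) > 0`,
the three points are `U = c D0_1 (D0_1 + D0_2) / (D1_1 (D1_1 + D1_2))`, `δ = c D0_1 D0_2 / (D1_1 D1_2)`
and `V = c D0_2 (D0_1 + D0_2) / (D1_2 (D1_1 + D1_2))`; both `U < δ` and `δ < V` reduce,
after clearing the positive denominators, to `D0_1 D1_2 < D0_2 D1_1`.
-/

noncomputable section

def stationaryCost (D0 D1 r : ℝ) : ℝ := r / D0 + 1 / D1

def crossover (D01 D02 D11 D12 : ℝ) : ℝ :=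
  D01 * D02 * (D12 - D11) / (D11 * D12 * (D01 - D02))

def lowerEndpoint (D01 D02 D11 D12 : ℝ) : ℝ :=
  D01 * (D11 - D12) * (D01 + D02) / (D11 * (D11 + D12) * (D02 - D01))

def upperEndpoint (D01 D02 D11 D12 : ℝ) : ℝ :=
  D02 * (D11 - D12) * (D01 + D02) / (D12 * (D11 + D12) * (D02 - D01))

end

theorem crossover_eq (D01 D02 D11 D12 : ℝ) :
    crossover D01 D02 D11 D12 = D01 * D02 * (D11 - D12) / (D11 * D12 * (D02 - D01)) := by
  rw [crossover, ← neg_sub D11, ← neg_sub D02, mul_neg, mul_neg, neg_div_neg_eq]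

theorem stationaryCost_crossover {D01 D02 D11 D12 : ℝ} (h01 : D01 ≠ 0) (h02 : D02 ≠ 0)
    (h11 : D11 ≠ 0) (h12 : D12 ≠ 0) (h0 : D01 ≠ D02) :
    stationaryCost D01 D11 (crossover D01 D02 D11 D12) =
      stationaryCost D02 D12 (crossover D01 D02 D11 D12) := by
  have : D01 - D02 ≠ 0 := sub_ne_zero.mpr h0
  unfold stationaryCost crossover
  field_simp
  ring

section Ordered

variable {D01 D02 D11 D12 : ℝ} (h01 : 0 < D01) (h12 : 0 < D12) (h0 : D01 < D02) (h1 : D12 < D11)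
include h01 h12 h0 h1

theorem crossover_pos : 0 < crossover D01 D02 D11 D12 := by
  have := sub_pos.mpr h0
  have := sub_pos.mpr h1
  have := h01.trans h0
  have := h12.trans h1
  rw [crossover_eq]
  positivity

theorem lowerEndpoint_lt_crossover :
    lowerEndpoint D01 D02 D11 D12 < crossover D01 D02 D11 D12 := by
  have := sub_pos.mpr h0
  have := sub_pos.mpr h1
  have := h12.trans h1
  have hc : 0 < D01 * D11 * (D11 - D12) * (D02 - D01) := by positivity
  have key := mul_lt_mul_of_pos_left (mul_lt_mul'' h0 h1 h01.le h12.le) hc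
  rw [crossover_eq, lowerEndpoint, div_lt_div_iff₀ (by positivity) (by positivity)]
  linear_combination key

theorem crossover_lt_upperEndpoint :
    crossover D01 D02 D11 D12 < upperEndpoint D01 D02 D11 D12 := by
  have := sub_pos.mpr h0
  have := sub_pos.mpr h1
  have := h01.trans h0
  have := h12.trans h1
  have hc : 0 < D02 * D12 * (D11 - D12) * (D02 - D01) := by positivity
  have key := mul_lt_mul_of_pos_left (mul_lt_mul'' h0 h1 h01.le h12.le) hc
  rw [crossover_eq, upperEndpoint, div_lt_div_iff₀ (by positivity) (by positivity)]
  linear_combination key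

end Ordered

theorem stmt_9_general (D01 D02 D11 D12 : ℝ)
    (h01 : 0 < D01) (h12 : 0 < D12)
    (h0 : D01 < D02) (h1 : D11 > D12) :
    0 < D01 * D02 * (D12 - D11) / (D11 * D12 * (D01 - D02)) ∧
    (D01 * D02 * (D12 - D11) / (D11 * D12 * (D01 - D02))) / D01 + 1 / D11 =
      (D01 * D02 * (D12 - D11) / (D11 * D12 * (D01 - D02))) / D02 + 1 / D12 ∧
    D01 * (D11 - D12) * (D01 + D02) / (D11 * (D11 + D12) * (D02 - D01)) <
      D01 * D02 * (D12 - D11) / (D11 * D12 * (D01 - D02)) ∧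
    D01 * D02 * (D12 - D11) / (D11 * D12 * (D01 - D02)) <
      D02 * (D11 - D12) * (D01 + D02) / (D12 * (D11 + D12) * (D02 - D01)) :=
  ⟨crossover_pos h01 h12 h0 h1,
    stationaryCost_crossover h01.ne' (h01.trans h0).ne' (h12.trans h1).ne' h12.ne' h0.ne,
    lowerEndpoint_lt_crossover h01 h12 h0 h1, crossover_lt_upperEndpoint h01 h12 h0 h1⟩

/-- The crossover prior ratio δ is positive, equalizes the two stationary costs,
and lies in the interval (U, V). -/
theorem stmt_9 (D01 D02 D11 D12 : ℝ)
    (h01 : 0 < D01) (h02 : 0 < D02) (h11 : 0 < D11) (h12 : 0 < D12)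
    (h0 : D01 < D02) (h1 : D11 > D12) :
    0 < D01 * D02 * (D12 - D11) / (D11 * D12 * (D01 - D02)) ∧
    (D01 * D02 * (D12 - D11) / (D11 * D12 * (D01 - D02))) / D01 + 1 / D11 =
      (D01 * D02 * (D12 - D11) / (D11 * D12 * (D01 - D02))) / D02 + 1 / D12 ∧
    D01 * (D11 - D12) * (D01 + D02) / (D11 * (D11 + D12) * (D02 - D01)) <
      D01 * D02 * (D12 - D11) / (D11 * D12 * (D01 - D02)) ∧
    D01 * D02 * (D12 - D11) / (D11 * D12 * (D01 - D02)) <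
      D02 * (D11 - D12) * (D01 + D02) / (D12 * (D11 + D12) * (D02 - D01)) :=
  stmt_9_general D01 D02 D11 D12 h01 h12 h0 h1
end

section
/- Let D0_1, D0_2, D1_1, D1_2 be positive with D0_1 < D0_2 and D1_1 > D1_2. For r ≤ U (with U as defined), G1(r) ≤ G12(r) ≤ G2(r), and for r ≥ V, G1(r) ≥ G12(r) ≥ G2(r), where G1(r)=r/D0_1+1/D1_1, G2(r)=r/D0_2+1/D1_2, G12(r)=2r/(D0_1+D0_2)+2/(D1_1+D1_2), U = D0_1(D1_1-D1_2)(D0_1+D0_2)/(D1_1(D1_1+D1_2)(D0_2-D0_1)), V = D0_2(D1_1-D1_2)(D0_1+D0_2)/(D1_2(D1_1+D1_2)(D0_2-D0_1)). -/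
/-- Order relations among the cost coefficients outside the interval (U, V). -/
theorem stmt_10 (D01 D02 D11 D12 : ℝ)
    (h01 : 0 < D01) (h02 : 0 < D02) (h11 : 0 < D11) (h12 : 0 < D12)
    (h0 : D01 < D02) (h1 : D11 > D12) :
    (∀ r : ℝ, 0 < r →
      r ≤ D01 * (D11 - D12) * (D01 + D02) / (D11 * (D11 + D12) * (D02 - D01)) →
      r / D01 + 1 / D11 ≤ 2 * r / (D01 + D02) + 2 / (D11 + D12) ∧
      2 * r / (D01 + D02) + 2 / (D11 + D12) ≤ r / D02 + 1 / D12) ∧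
    (∀ r : ℝ, 0 < r →
      D02 * (D11 - D12) * (D01 + D02) / (D12 * (D11 + D12) * (D02 - D01)) ≤ r →
      r / D01 + 1 / D11 ≥ 2 * r / (D01 + D02) + 2 / (D11 + D12) ∧
      2 * r / (D01 + D02) + 2 / (D11 + D12) ≥ r / D02 + 1 / D12) := by
  have h0' : 0 < D02 - D01 := by linarith
  have h1' : 0 < D11 - D12 := by linarith
  have hs0 : 0 < D01 + D02 := by linarith
  have hs1 : 0 < D11 + D12 := by linarith
  constructor
  · intro r hr hU
    have hU' : r * (D11 * (D11 + D12) * (D02 - D01)) ≤ D01 * (D11 - D12) * (D01 + D02) := by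
      rw [← le_div_iff₀ (by positivity)]; exact hU
    constructor
    · rw [div_add_div _ _ (ne_of_gt h01) (ne_of_gt h11),
        div_add_div _ _ (ne_of_gt hs0) (ne_of_gt hs1),
        div_le_div_iff₀ (by positivity) (by positivity)]
      nlinarith [mul_pos h01 h11, mul_pos hs0 hs1]
    · rw [div_add_div _ _ (ne_of_gt hs0) (ne_of_gt hs1),
        div_add_div _ _ (ne_of_gt h02) (ne_of_gt h12),
        div_le_div_iff₀ (by positivity) (by positivity)]
      nlinarith [mul_le_mul_of_nonneg_left hU' (le_of_lt h12),
        mul_pos (mul_pos h1' hs0) (mul_pos h0' hs1),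
        mul_pos h02 h11, mul_pos h01 h12,
        mul_nonneg (mul_nonneg (le_of_lt h1') (le_of_lt hs0)) (sub_nonneg.mpr (mul_le_mul h0.le h1.le h12.le h02.le))]
  · intro r hr hV
    have hV' : D02 * (D11 - D12) * (D01 + D02) ≤ r * (D12 * (D11 + D12) * (D02 - D01)) := by
      rw [← div_le_iff₀ (by positivity)]; exact hV
    constructor
    · rw [ge_iff_le, div_add_div _ _ (ne_of_gt hs0) (ne_of_gt hs1),
        div_add_div _ _ (ne_of_gt h01) (ne_of_gt h11),
        div_le_div_iff₀ (by positivity) (by positivity)]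
      nlinarith [mul_le_mul_of_nonneg_left hV' (le_of_lt h11),
        mul_pos h02 h11, mul_pos h01 h12,
        mul_nonneg (mul_nonneg (le_of_lt h1') (le_of_lt hs0)) (sub_nonneg.mpr (mul_le_mul h0.le h1.le h12.le h02.le))]
    · rw [ge_iff_le, div_add_div _ _ (ne_of_gt h02) (ne_of_gt h12),
        div_add_div _ _ (ne_of_gt hs0) (ne_of_gt hs1),
        div_le_div_iff₀ (by positivity) (by positivity)]
      nlinarith [mul_pos h02 h12, mul_pos hs0 hs1]
end

section
/- Suppose D0 : Φ → ℝ+ and D1 : Φ → ℝ+ on a finite set Φ with |Φ| ≥ 2, and suppose no φ ∈ Φ satisfies D0(φ) ≥ D0(φ') and D1(φ) ≥ D1(φ') for all φ' ∈ Φ. For r > 0 define G(φ, r) = r/D0(φ) + 1/D1(φ). Then there exist φ1, φ2 ∈ Φ with D0(φ1) < D0(φ2) and D1(φ1) > D1(φ2) such that both φ1 and φ2 attain min_φ G(φ, r) for some values of r, and the minimizer of G(·, r) over Φ is not constant in r. -/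
/-- Lexicographic maximizer: maximize `A`, break ties by `B`. -/
lemma stmt13_lexmax {Φ : Type*} [Fintype Φ] [Nonempty Φ] (A B : Φ → ℝ) :
    ∃ m : Φ, (∀ φ, A φ ≤ A m) ∧ (∀ φ, A m ≤ A φ → B φ ≤ B m) := by
  obtain ⟨a, -, ha⟩ := Finset.exists_max_image Finset.univ A Finset.univ_nonempty
  have hat : a ∈ Finset.univ.filter (fun φ => A a ≤ A φ) := by simp
  obtain ⟨m, hm, hm2⟩ := Finset.exists_max_image _ B ⟨a, hat⟩
  have hAm : A a ≤ A m := (Finset.mem_filter.mp hm).2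
  refine ⟨m, fun φ => (ha φ (Finset.mem_univ φ)).trans hAm, fun φ hφ => ?_⟩
  exact hm2 φ (Finset.mem_filter.mpr ⟨Finset.mem_univ φ, hAm.trans hφ⟩)

/-- Monotonicity of the cost in the divergences. -/
lemma stmt13_mono {r a b c d : ℝ} (hr : 0 ≤ r) (ha : 0 < a) (hc : 0 < c)
    (hab : a ≤ b) (hcd : c ≤ d) : r / b + 1 / d ≤ r / a + 1 / c := by
  have h1 : 1 / b ≤ 1 / a := one_div_le_one_div_of_le ha hab
  have h2 : 1 / d ≤ 1 / c := one_div_le_one_div_of_le hc hcd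
  have h3 : r * (1 / b) ≤ r * (1 / a) := mul_le_mul_of_nonneg_left h1 hr
  rw [div_eq_mul_one_div r b, div_eq_mul_one_div r a]
  linarith

/-- Without a dominating quantizer, at least two distinct quantizers are optimal
for different prior ratios, and no single quantizer minimizes the sequential cost
coefficient for every prior ratio. -/
theorem stmt_13 {Φ : Type*} [Fintype Φ] (hcard : 2 ≤ Fintype.card Φ)
    (D0 D1 : Φ → ℝ) (hD0 : ∀ φ, 0 < D0 φ) (hD1 : ∀ φ, 0 < D1 φ)
    (hnodom : ¬ ∃ φ : Φ, ∀ φ' : Φ, D0 φ' ≤ D0 φ ∧ D1 φ' ≤ D1 φ) :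
    ∃ φ1 φ2 : Φ, D0 φ1 < D0 φ2 ∧ D1 φ1 > D1 φ2 ∧
      (∃ r : ℝ, 0 < r ∧ ∀ φ : Φ, r / D0 φ1 + 1 / D1 φ1 ≤ r / D0 φ + 1 / D1 φ) ∧
      (∃ r : ℝ, 0 < r ∧ ∀ φ : Φ, r / D0 φ2 + 1 / D1 φ2 ≤ r / D0 φ + 1 / D1 φ) ∧
      ¬ ∃ φ0 : Φ, ∀ r : ℝ, 0 < r →
        ∀ φ : Φ, r / D0 φ0 + 1 / D1 φ0 ≤ r / D0 φ + 1 / D1 φ := by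
  have hne : Nonempty Φ := Fintype.card_pos_iff.mp (by omega)
  obtain ⟨φ1, hP1, hP2⟩ := stmt13_lexmax D1 D0
  obtain ⟨φ2, hQ1, hQ2⟩ := stmt13_lexmax D0 D1
  have h01 : D0 φ1 < D0 φ2 := by
    rcases lt_or_eq_of_le (hQ1 φ1) with h | h
    · exact h
    · exact absurd ⟨φ2, fun φ' => ⟨hQ1 φ', (hP1 φ').trans (hQ2 φ1 h.ge)⟩⟩ hnodom
  have h12 : D1 φ2 < D1 φ1 := by
    rcases lt_or_eq_of_le (hP1 φ2) with h | h
    · exact h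
    · exact absurd ⟨φ1, fun φ' => ⟨(hQ1 φ').trans (hP2 φ2 h.ge), hP1 φ'⟩⟩ hnodom
  refine ⟨φ1, φ2, h01, h12, ?_, ?_, ?_⟩
  · -- small r : φ1 optimal
    have key : ∀ φ : Φ, ∃ ε : ℝ, 0 < ε ∧ ∀ r : ℝ, 0 < r → r ≤ ε →
        r / D0 φ1 + 1 / D1 φ1 ≤ r / D0 φ + 1 / D1 φ := by
      intro φ
      by_cases h : D0 φ ≤ D0 φ1
      · exact ⟨1, one_pos, fun r hr _ =>
          stmt13_mono hr.le (hD0 φ) (hD1 φ) h (hP1 φ)⟩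
      · push_neg at h
        have hy : D1 φ < D1 φ1 := by
          rcases lt_or_eq_of_le (hP1 φ) with h' | h'
          · exact h'
          · exact absurd (hP2 φ h'.ge) (not_le.mpr h)
        have hc : 0 < 1 / D0 φ1 - 1 / D0 φ := by
          have := one_div_lt_one_div_of_lt (hD0 φ1) h; linarith
        have hδ : 0 < 1 / D1 φ - 1 / D1 φ1 := by
          have := one_div_lt_one_div_of_lt (hD1 φ) hy; linarith
        refine ⟨(1 / D1 φ - 1 / D1 φ1) / (1 / D0 φ1 - 1 / D0 φ),
          div_pos hδ hc, fun r hr hrε => ?_⟩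
        have hkey : r * (1 / D0 φ1 - 1 / D0 φ) ≤ 1 / D1 φ - 1 / D1 φ1 := by
          calc r * (1 / D0 φ1 - 1 / D0 φ)
              ≤ (1 / D1 φ - 1 / D1 φ1) / (1 / D0 φ1 - 1 / D0 φ)
                * (1 / D0 φ1 - 1 / D0 φ) := mul_le_mul_of_nonneg_right hrε hc.le
            _ = 1 / D1 φ - 1 / D1 φ1 := div_mul_cancel₀ _ hc.ne'
        rw [mul_sub] at hkey
        rw [div_eq_mul_one_div r (D0 φ1), div_eq_mul_one_div r (D0 φ)]
        linarith
    choose ε hεpos hε using key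
    refine ⟨Finset.univ.inf' Finset.univ_nonempty ε, ?_, fun φ => ?_⟩
    · exact (Finset.lt_inf'_iff _).mpr (fun b _ => hεpos b)
    · exact hε φ _ ((Finset.lt_inf'_iff _).mpr (fun b _ => hεpos b))
        (Finset.inf'_le _ (Finset.mem_univ φ))
  · -- large r : φ2 optimal
    have key : ∀ φ : Φ, ∃ M : ℝ, 0 < M ∧ ∀ r : ℝ, M ≤ r →
        r / D0 φ2 + 1 / D1 φ2 ≤ r / D0 φ + 1 / D1 φ := by
      intro φ
      by_cases h : D1 φ ≤ D1 φ2
      · exact ⟨1, one_pos, fun r hr =>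
          stmt13_mono (by linarith) (hD0 φ) (hD1 φ) (hQ1 φ) h⟩
      · push_neg at h
        have hx : D0 φ < D0 φ2 := by
          rcases lt_or_eq_of_le (hQ1 φ) with h' | h'
          · exact h'
          · exact absurd (hQ2 φ h'.ge) (not_le.mpr h)
        have hc : 0 < 1 / D0 φ - 1 / D0 φ2 := by
          have := one_div_lt_one_div_of_lt (hD0 φ) hx; linarith
        have hδ : 0 < 1 / D1 φ2 - 1 / D1 φ := by
          have := one_div_lt_one_div_of_lt (hD1 φ2) h; linarith
        refine ⟨(1 / D1 φ2 - 1 / D1 φ) / (1 / D0 φ - 1 / D0 φ2),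
          div_pos hδ hc, fun r hr => ?_⟩
        have hkey : 1 / D1 φ2 - 1 / D1 φ ≤ r * (1 / D0 φ - 1 / D0 φ2) := by
          calc 1 / D1 φ2 - 1 / D1 φ
              = (1 / D1 φ2 - 1 / D1 φ) / (1 / D0 φ - 1 / D0 φ2)
                * (1 / D0 φ - 1 / D0 φ2) := (div_mul_cancel₀ _ hc.ne').symm
            _ ≤ r * (1 / D0 φ - 1 / D0 φ2) := mul_le_mul_of_nonneg_right hr hc.le
        rw [mul_sub] at hkey
        rw [div_eq_mul_one_div r (D0 φ2), div_eq_mul_one_div r (D0 φ)]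
        linarith
    choose M hMpos hM using key
    refine ⟨Finset.univ.sup' Finset.univ_nonempty M, ?_, fun φ => ?_⟩
    · exact (Finset.lt_sup'_iff _).mpr ⟨φ1, Finset.mem_univ φ1, hMpos φ1⟩
    · exact hM φ _ (Finset.le_sup' _ (Finset.mem_univ φ))
  · -- no single optimal φ0 for all r
    rintro ⟨φ0, hφ0⟩
    apply hnodom
    refine ⟨φ0, fun φ => ⟨?_, ?_⟩⟩
    · -- D0 φ ≤ D0 φ0
      by_contra hlt
      push_neg at hlt
      have he : 0 < 1 / D0 φ0 - 1 / D0 φ := by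
        have := one_div_lt_one_div_of_lt (hD0 φ0) hlt; linarith
      set K := 1 / D1 φ - 1 / D1 φ0 with hK
      set r := (|K| + 1) / (1 / D0 φ0 - 1 / D0 φ) with hr
      have hrpos : 0 < r := div_pos (by positivity) he
      have h1 := hφ0 r hrpos φ
      have h2 : r * (1 / D0 φ0 - 1 / D0 φ) = |K| + 1 := div_mul_cancel₀ _ he.ne'
      rw [mul_sub] at h2
      rw [div_eq_mul_one_div r (D0 φ0), div_eq_mul_one_div r (D0 φ)] at h1
      have := le_abs_self K
      rw [hK] at this
      linarith
    · -- D1 φ ≤ D1 φ0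
      by_contra hlt
      push_neg at hlt
      have ha : 0 < 1 / D1 φ0 - 1 / D1 φ := by
        have := one_div_lt_one_div_of_lt (hD1 φ0) hlt; linarith
      set c := 1 / D0 φ - 1 / D0 φ0 with hcdef
      set r := (1 / D1 φ0 - 1 / D1 φ) / (2 * (|c| + 1)) with hrdef
      have hb : (0:ℝ) < 2 * (|c| + 1) := by positivity
      have hrpos : 0 < r := div_pos ha hb
      have h1 := hφ0 r hrpos φ
      have h2 : r * c ≤ r * |c| := mul_le_mul_of_nonneg_left (le_abs_self c) hrpos.le
      have h3 : r * |c| ≤ r * (|c| + 1) := by nlinarith [abs_nonneg c]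
      have h4 : r * (2 * (|c| + 1)) = 1 / D1 φ0 - 1 / D1 φ := by
        rw [hrdef]; exact div_mul_cancel₀ _ hb.ne'
      rw [hcdef] at h2
      rw [mul_sub] at h2
      rw [div_eq_mul_one_div r (D0 φ0), div_eq_mul_one_div r (D0 φ)] at h1
      nlinarith [abs_nonneg c]
end

section
/- Let D_A^0, D_B^0, D_A^1, D_B^1 be positive reals with D_A^0 > D_B^0 and D_A^1 < D_B^1, and let d ≥ 1 be an integer. Define, for k = 0,...,d, G_k(r) = r/(k·D_A^0 + (d-k)·D_B^0) + 1/(k·D_A^1 + (d-k)·D_B^1), and define G(r) = 2r/(D_A^0 + (2d-1)·D_B^0) + 2/(D_A^1 + (2d-1)·D_B^1). Then there exists a nonempty open interval (U,V) ⊂ (0,∞) such that for all r ∈ (U,V), G(r) < min_{0≤k≤d} G_k(r), where U = [(D_B^1 - D_A^1)/(D_A^0 - D_B^0)]·[(D_A^0 + (2d-1)D_B^0)/(D_A^1 + (2d-1)D_B^1)]·(D_B^0/D_B^1) and V = [(D_B^1 - D_A^1)/(D_A^0 - D_B^0)]·[(D_A^0 + (2d-1)D_B^0)/(D_A^1 +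 (2d-1)D_B^1)]·[(D_A^0 + (d-1)D_B^0)/(D_A^1 + (d-1)D_B^1)]. -/
set_option maxHeartbeats 1000000

lemma aux_ineq_stmt15 (r S0 S1 P Q e0 e1 t : ℝ)
    (hS0 : 0 < S0) (hS1 : 0 < S1) (hP : 0 < P) (hQ : 0 < Q)
    (h2P : 2*P = S0 + t*e0) (h2Q : 2*Q = S1 - t*e1)
    (hkey : 0 < t * (e1*S0*P - r*e0*S1*Q)) :
    2*r/S0 + 2/S1 < r/P + 1/Q := by
  rw [div_add_div _ _ (ne_of_gt hS0) (ne_of_gt hS1),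
    div_add_div _ _ (ne_of_gt hP) (ne_of_gt hQ),
    div_lt_div_iff₀ (mul_pos hS0 hS1) (mul_pos hP hQ)]
  have hid : (r*Q + P*1)*(S0*S1) - (2*r*S1 + S0*2)*(P*Q)
      = t*(e1*S0*P - r*e0*S1*Q) := by
    linear_combination (-(r*S1*Q))*h2P + (-(S0*P))*h2Q
  linarith

/-- Multi-sensor suboptimality of stationary designs: on a nonempty open interval
(U, V) of prior ratios, the non-stationary design beats every stationary one. -/
theorem stmt_15 (DA0 DB0 DA1 DB1 : ℝ) (d : ℕ) (hd : 1 ≤ d)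
    (hDA0 : 0 < DA0) (hDB0 : 0 < DB0) (hDA1 : 0 < DA1) (hDB1 : 0 < DB1)
    (h0 : DA0 > DB0) (h1 : DA1 < DB1) :
    ((DB1 - DA1) / (DA0 - DB0)) *
        ((DA0 + (2 * (d:ℝ) - 1) * DB0) / (DA1 + (2 * (d:ℝ) - 1) * DB1)) *
        (DB0 / DB1) <
      ((DB1 - DA1) / (DA0 - DB0)) *
        ((DA0 + (2 * (d:ℝ) - 1) * DB0) / (DA1 + (2 * (d:ℝ) - 1) * DB1)) *
        ((DA0 + ((d:ℝ) - 1) * DB0) / (DA1 + ((d:ℝ) - 1) * DB1)) ∧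
    ∀ r : ℝ,
      ((DB1 - DA1) / (DA0 - DB0)) *
          ((DA0 + (2 * (d:ℝ) - 1) * DB0) / (DA1 + (2 * (d:ℝ) - 1) * DB1)) *
          (DB0 / DB1) < r →
      r < ((DB1 - DA1) / (DA0 - DB0)) *
          ((DA0 + (2 * (d:ℝ) - 1) * DB0) / (DA1 + (2 * (d:ℝ) - 1) * DB1)) *
          ((DA0 + ((d:ℝ) - 1) * DB0) / (DA1 + ((d:ℝ) - 1) * DB1)) →
      ∀ k : ℕ, k ≤ d →
        2 * r / (DA0 + (2 * (d:ℝ) - 1) * DB0) + 2 / (DA1 + (2 * (d:ℝ) - 1) * DB1) <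
          r / ((k:ℝ) * DA0 + ((d:ℝ) - (k:ℝ)) * DB0) +
            1 / ((k:ℝ) * DA1 + ((d:ℝ) - (k:ℝ)) * DB1) := by
  have hd' : (1:ℝ) ≤ (d:ℝ) := by exact_mod_cast hd
  have he0p : (0:ℝ) < DA0 - DB0 := by linarith
  have he1p : (0:ℝ) < DB1 - DA1 := by linarith
  have hS0 : (0:ℝ) < DA0 + (2*(d:ℝ)-1)*DB0 := by
    nlinarith [mul_nonneg (by linarith : (0:ℝ) ≤ 2*(d:ℝ)-1) hDB0.le]
  have hS1 : (0:ℝ) < DA1 + (2*(d:ℝ)-1)*DB1 := by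
    nlinarith [mul_nonneg (by linarith : (0:ℝ) ≤ 2*(d:ℝ)-1) hDB1.le]
  have hT0 : (0:ℝ) < DA0 + ((d:ℝ)-1)*DB0 := by
    nlinarith [mul_nonneg (by linarith : (0:ℝ) ≤ (d:ℝ)-1) hDB0.le]
  have hT1 : (0:ℝ) < DA1 + ((d:ℝ)-1)*DB1 := by
    nlinarith [mul_nonneg (by linarith : (0:ℝ) ≤ (d:ℝ)-1) hDB1.le]
  have hC : (0:ℝ) < ((DB1 - DA1) / (DA0 - DB0)) *
      ((DA0 + (2 * (d:ℝ) - 1) * DB0) / (DA1 + (2 * (d:ℝ) - 1) * DB1)) :=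
    mul_pos (div_pos he1p he0p) (div_pos hS0 hS1)
  constructor
  · apply mul_lt_mul_of_pos_left _ hC
    rw [div_lt_div_iff₀ hDB1 hT1]
    nlinarith [mul_lt_mul_of_pos_right h0 hDA1, mul_lt_mul_of_pos_left h1 hDA0,
      mul_nonneg (by linarith : (0:ℝ) ≤ (d:ℝ)-1) (mul_pos hDB0 hDB1).le]
  · intro r hU hV k hk
    have hr : 0 < r :=
      lt_trans (mul_pos hC (div_pos hDB0 hDB1)) hU
    -- convert interval hypotheses to polynomial form
    rw [div_mul_div_comm, div_mul_div_comm,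
      div_lt_iff₀ (mul_pos (mul_pos he0p hS1) hDB1)] at hU
    rw [div_mul_div_comm, div_mul_div_comm,
      lt_div_iff₀ (mul_pos (mul_pos he0p hS1) hT1)] at hV
    have hmd : ((k:ℝ)) ≤ (d:ℝ) := by exact_mod_cast hk
    have hm0 : (0:ℝ) ≤ (k:ℝ) := Nat.cast_nonneg k
    have hP : (0:ℝ) < (k:ℝ) * DA0 + ((d:ℝ) - (k:ℝ)) * DB0 := by
      nlinarith [mul_le_mul_of_nonneg_left h0.le hm0,
        mul_nonneg (by linarith : (0:ℝ) ≤ (d:ℝ)-1) hDB0.le]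
    have hQ : (0:ℝ) < (k:ℝ) * DA1 + ((d:ℝ) - (k:ℝ)) * DB1 := by
      nlinarith [mul_le_mul_of_nonneg_left h1.le (by linarith : (0:ℝ) ≤ (d:ℝ)-(k:ℝ)),
        mul_nonneg (by linarith : (0:ℝ) ≤ (d:ℝ)-1) hDA1.le]
    apply aux_ineq_stmt15 r _ _ _ _ (DA0 - DB0) (DB1 - DA1) (2*(k:ℝ)-1)
      hS0 hS1 hP hQ (by ring) (by ring)
    rcases Nat.eq_zero_or_pos k with rfl | hk1
    · push_cast
      have h := mul_lt_mul_of_pos_left hU (by linarith : (0:ℝ) < (d:ℝ))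
      nlinarith [h]
    · have hm1 : (1:ℝ) ≤ (k:ℝ) := by exact_mod_cast hk1
      have ht : (0:ℝ) < 2*(k:ℝ)-1 := by linarith
      have hinner : 0 < (DB1 - DA1) * (DA0 + (2*(d:ℝ)-1)*DB0) *
            ((k:ℝ) * DA0 + ((d:ℝ) - (k:ℝ)) * DB0)
          - r * (DA0 - DB0) * (DA1 + (2*(d:ℝ)-1)*DB1) *
            ((k:ℝ) * DA1 + ((d:ℝ) - (k:ℝ)) * DB1) := by
        linarith [hV,
          mul_nonneg (by linarith : (0:ℝ) ≤ (k:ℝ)-1)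
            (mul_pos (mul_pos he1p he0p) hS0).le,
          mul_nonneg (by linarith : (0:ℝ) ≤ (k:ℝ)-1)
            (mul_pos (mul_pos (mul_pos hr he0p) he1p) hS1).le]
      exact mul_pos ht hinner
end

section
/- For probability pairs: if 0 < p'_1+b'_1 and 0 < p'_0+b'_0 with (p'_1+b'_1)/(p'_0+b'_0) ≤ a'_1/a'_0 < b'_1/b'_0, and p'_0+a'_0+b'_0+c'_0 = p'_1+a'_1+b'_1+c'_1 = 1 with a'_1/a'_0 < c'_1/c'_0, then replacing (a'_1, b'_1) by (a''_1, b''_1) with a''_1/a'_0 = b''_1/b'_0 = (1 - p'_1 - c'_1)/(1 - p'_0 - c'_0) and a''_1 + b''_1 = a'_1 + b'_1 does not decrease either D̃0(p'+b', a'+c') or D̃1(p'+b', a'+c'); i.e., D̃0(p'+b', a'+c') ≤ D̃0(p'+b'', a''+c') and D̃1(p'+b', a'+c') ≤ D̃1(p'+b'', a''+c'). -/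
lemma klb (u v : ℝ) (hu : 0 < u) (hv : 0 < v) :
    u - v ≤ u * (Real.log u - Real.log v) := by
  have h := Real.log_le_sub_one_of_pos (div_pos hv hu)
  rw [Real.log_div hv.ne' hu.ne'] at h
  have hxx : u * (v / u) = v := by field_simp
  nlinarith

lemma main1 (m1 m2 x y d : ℝ) (hm1 : 0 < m1) (hm2 : 0 < m2) (hx : 0 < x) (hy : 0 < y)
    (hd : 0 ≤ d) (hxd : 0 < x - d) (hcross : x * m2 ≤ y * m1) :
    m1 * Real.log (m1 / x) + m2 * Real.log (m2 / y) ≤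
      m1 * Real.log (m1 / (x - d)) + m2 * Real.log (m2 / (y + d)) := by
  have hyd : 0 < y + d := by linarith
  have k1 : x * (Real.log (x - d) - Real.log x) ≤ -d := by
    have h := Real.log_le_sub_one_of_pos (div_pos hxd hx)
    rw [Real.log_div hxd.ne' hx.ne'] at h
    have hxx : x * ((x - d) / x) = x - d := by field_simp
    nlinarith
  have k2 : y * (Real.log (y + d) - Real.log y) ≤ d := by
    have h := Real.log_le_sub_one_of_pos (div_pos hyd hy)
    rw [Real.log_div hyd.ne' hy.ne'] at h
    have hyy : y * ((y + d) / y) = y + d := by field_simp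
    nlinarith
  rw [Real.log_div hm1.ne' hx.ne', Real.log_div hm2.ne' hy.ne',
    Real.log_div hm1.ne' hxd.ne', Real.log_div hm2.ne' hyd.ne']
  nlinarith [mul_pos hx hy,
    mul_le_mul_of_nonneg_left k1 (mul_nonneg hm1.le hy.le),
    mul_le_mul_of_nonneg_left k2 (mul_nonneg hm2.le hx.le),
    mul_nonneg hd (sub_nonneg.mpr hcross)]

lemma main2 (m1 m2 x y d : ℝ) (hm1 : 0 < m1) (hm2 : 0 < m2) (hx : 0 < x) (hy : 0 < y)
    (hd : 0 ≤ d) (hxd : 0 < x - d) (hcross : x * m2 ≤ y * m1) :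
    x * Real.log (x / m1) + y * Real.log (y / m2) ≤
      (x - d) * Real.log ((x - d) / m1) + (y + d) * Real.log ((y + d) / m2) := by
  have hyd : 0 < y + d := by linarith
  have k1 : (x - d) - x ≤ (x - d) * (Real.log (x - d) - Real.log x) := klb _ _ hxd hx
  have k2 : (y + d) - y ≤ (y + d) * (Real.log (y + d) - Real.log y) := klb _ _ hyd hy
  have k3 : Real.log x - Real.log m1 ≤ Real.log y - Real.log m2 := by
    have hdiv : x / m1 ≤ y / m2 := by rw [div_le_div_iff₀ hm1 hm2]; exact hcross
    have h := Real.log_le_log (by positivity) hdiv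
    rwa [Real.log_div hx.ne' hm1.ne', Real.log_div hy.ne' hm2.ne'] at h
  rw [Real.log_div hx.ne' hm1.ne', Real.log_div hy.ne' hm2.ne',
    Real.log_div hxd.ne' hm1.ne', Real.log_div hyd.ne' hm2.ne']
  nlinarith [k1, k2, mul_le_mul_of_nonneg_left k3 hd]


/-- Monotonicity step in the proof of optimality of likelihood ratio threshold
rules: equalizing the ratios of `a` and `b` (keeping `a₁ + b₁` fixed) does not
decrease either unnormalized KL-type divergence. -/
theorem stmt_16 (p0 p1 a0 a1 b0 b1 c0 c1 a1' b1' : ℝ)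
    (hp0 : 0 < p0) (hp1 : 0 < p1) (ha0 : 0 < a0) (ha1 : 0 < a1)
    (hb0 : 0 < b0) (hb1 : 0 < b1) (hc0 : 0 < c0) (hc1 : 0 < c1)
    (ha1' : 0 < a1') (hb1' : 0 < b1')
    (hord1 : (p1 + b1) / (p0 + b0) ≤ a1 / a0)
    (hord2 : a1 / a0 < b1 / b0)
    (hord3 : a1 / a0 < c1 / c0)
    (hsum0 : p0 + a0 + b0 + c0 = 1) (hsum1 : p1 + a1 + b1 + c1 = 1)
    (hra : a1' / a0 = (1 - p1 - c1) / (1 - p0 - c0))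
    (hrb : b1' / b0 = (1 - p1 - c1) / (1 - p0 - c0))
    (hkeep : a1' + b1' = a1 + b1) :
    (p0 + b0) * Real.log ((p0 + b0) / (p1 + b1)) +
        (a0 + c0) * Real.log ((a0 + c0) / (a1 + c1)) ≤
      (p0 + b0) * Real.log ((p0 + b0) / (p1 + b1')) +
        (a0 + c0) * Real.log ((a0 + c0) / (a1' + c1)) ∧
    (p1 + b1) * Real.log ((p1 + b1) / (p0 + b0)) +
        (a1 + c1) * Real.log ((a1 + c1) / (a0 + c0)) ≤
      (p1 + b1') * Real.log ((p1 + b1') / (p0 + b0)) +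
        (a1' + c1) * Real.log ((a1' + c1) / (a0 + c0)) := by
  have hpb0 : 0 < p0 + b0 := by linarith
  have hpb1 : 0 < p1 + b1 := by linarith
  have hac0 : 0 < a0 + c0 := by linarith
  have hac1 : 0 < a1 + c1 := by linarith
  -- rewrite hrb using the sum constraints
  have h0 : (1:ℝ) - p0 - c0 = a0 + b0 := by linarith
  have h1 : (1:ℝ) - p1 - c1 = a1 + b1 := by linarith
  rw [h0, h1, div_eq_div_iff hb0.ne' (by positivity : (a0 + b0) ≠ 0)] at hrb
  have hcr2 : a1 * b0 < b1 * a0 := (div_lt_div_iff₀ ha0 hb0).mp hord2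
  have hlt : b1' * (a0 + b0) < b1 * (a0 + b0) := by nlinarith
  have hb1'le : b1' < b1 := lt_of_mul_lt_mul_right hlt (by linarith)
  have hd : 0 ≤ b1 - b1' := by linarith
  have hxd : 0 < p1 + b1 - (b1 - b1') := by linarith
  -- main cross inequality
  have h2 : (p1 + b1) * a0 ≤ a1 * (p0 + b0) := (div_le_div_iff₀ hpb0 ha0).mp hord1
  have h3 : a1 * c0 < c1 * a0 := (div_lt_div_iff₀ ha0 hc0).mp hord3
  have H : (p1 + b1) * (a0 + c0) * a0 ≤ (a1 + c1) * (p0 + b0) * a0 := by nlinarith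
  have hcross : (p1 + b1) * (a0 + c0) ≤ (a1 + c1) * (p0 + b0) :=
    le_of_mul_le_mul_right H ha0
  have e1 : p1 + b1' = p1 + b1 - (b1 - b1') := by ring
  have e2 : a1' + c1 = a1 + c1 + (b1 - b1') := by linarith
  constructor
  · rw [e1, e2]
    exact main1 (p0 + b0) (a0 + c0) (p1 + b1) (a1 + c1) (b1 - b1')
      hpb0 hac0 hpb1 hac1 hd hxd hcross
  · rw [e1, e2]
    exact main2 (p0 + b0) (a0 + c0) (p1 + b1) (a1 + c1) (b1 - b1')
      hpb0 hac0 hpb1 hac1 hd hxd hcross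
end

section
/- Let Φ be the set of pairs (p, q) ∈ (0,1)² (representing binary quantizer output distributions f_φ^0(0)=p, f_φ^1(0)=q, p ≠ q). If K ⊂ (0,1)² is a compact convex set with finitely many extreme points, and G(p,q) = c0/D(p,q) + c1/D(q,p) for nonnegative c0, c1, then min over K of G is attained at an extreme point of K. -/
/-!
Write `D(a, b) = (b - a)² J(a, b)` with `J(a, b) = ∫₀¹ r / (s (1 - s)) dr` and
`s = (1 - r) a + r b`. Since `s (1 - s)` is concave in `(a, b)`, each integrand has a concave
reciprocal, and the two-term Cauchy–Schwarz inequality `(Y + Z)⁻¹ ≤ θ² / Y + (1 - θ)² / Z`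
shows that an integral of positive functions with concave reciprocals again has a concave
reciprocal. Hence `G (p - q)² = c₀ / J(p, q) + c₁ / J(q, p)` is concave and nonnegative, so for
`t > 0` the superlevel set `{G ≥ t}` is the superlevel set `{G (p - q)² - t (p - q)² ≥ 0}` of a
concave function: `G` is quasiconcave. The minimum of `G` over the extreme points of `K` is
therefore a lower bound on their convex hull, which is all of `K` by Krein–Milman.
-/

open Set Real intervalIntegral

noncomputable section

def binKL (p q : ℝ) : ℝ := p * log (p / q) + (1 - p) * log ((1 - p) / (1 - q))

def quantizerCost (c0 c1 : ℝ) (x : ℝ × ℝ) : ℝ := c0 / binKL x.1 x.2 + c1 / binKL x.2 x.1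

def bernVar (s : ℝ) : ℝ := s * (1 - s)

def klIntegral (x : ℝ × ℝ) : ℝ := ∫ r in (0:ℝ)..1, r / bernVar ((1 - r) * x.1 + r * x.2)

end

theorem inv_add_le_sq_div_add_sq_div {Y Z : ℝ} (hY : 0 < Y) (hZ : 0 < Z) (θ : ℝ) :
    (Y + Z)⁻¹ ≤ θ ^ 2 / Y + (1 - θ) ^ 2 / Z := by
  rw [div_add_div _ _ hY.ne' hZ.ne', inv_eq_one_div,
    div_le_div_iff₀ (by positivity) (by positivity)]
  nlinarith [sq_nonneg (θ * Z - (1 - θ) * Y), mul_pos hY hZ]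

section InvConcave

variable {E : Type*} [AddCommGroup E] [Module ℝ E] {s : Set E} {f : E → ℝ}

theorem ConcaveOn.le_sq_div_mul_add_of_inv (hf : ConcaveOn ℝ s fun x => (f x)⁻¹)
    (hpos : ∀ x ∈ s, 0 < f x) {x y : E} (hx : x ∈ s) (hy : y ∈ s) {a b : ℝ}
    (ha : 0 < a) (hb : 0 < b) (hab : a + b = 1) (θ : ℝ) :
    f (a • x + b • y) ≤ θ ^ 2 / a * f x + (1 - θ) ^ 2 / b * f y := by
  have hfx := hpos x hx
  have hfy := hpos y hy
  have hfxy := hpos _ (hf.1 hx hy ha.le hb.le hab)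
  have hconc : a / f x + b / f y ≤ (f (a • x + b • y))⁻¹ := by
    simpa only [smul_eq_mul, div_eq_mul_inv] using hf.2 hx hy ha.le hb.le hab
  calc f (a • x + b • y) ≤ (a / f x + b / f y)⁻¹ :=
        (le_inv_comm₀ hfxy (by positivity)).2 hconc
    _ ≤ θ ^ 2 / (a / f x) + (1 - θ) ^ 2 / (b / f y) :=
        inv_add_le_sq_div_add_sq_div (by positivity) (by positivity) θ
    _ = θ ^ 2 / a * f x + (1 - θ) ^ 2 / b * f y := by field_simp

theorem concaveOn_inv_of_le_sq_div_mul_add (hs : Convex ℝ s) (hpos : ∀ x ∈ s, 0 < f x)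
    (h : ∀ x ∈ s, ∀ y ∈ s, ∀ a b : ℝ, 0 < a → 0 < b → a + b = 1 → ∀ θ : ℝ,
      f (a • x + b • y) ≤ θ ^ 2 / a * f x + (1 - θ) ^ 2 / b * f y) :
    ConcaveOn ℝ s fun x => (f x)⁻¹ := by
  refine concaveOn_iff_forall_pos.2 ⟨hs, fun x hx y hy a b ha hb hab => ?_⟩
  have hfx := hpos x hx
  have hfy := hpos y hy
  have hfxy := hpos _ (hs hx hy ha.le hb.le hab)
  have key := h x hx y hy a b ha hb hab (a * f y / (a * f y + b * f x))
  have hopt : (a * f y / (a * f y + b * f x)) ^ 2 / a * f x +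
      (1 - a * f y / (a * f y + b * f x)) ^ 2 / b * f y = (a / f x + b / f y)⁻¹ := by
    field_simp
    ring
  rw [hopt, le_inv_comm₀ hfxy (by positivity)] at key
  simpa only [smul_eq_mul, div_eq_mul_inv] using key

end InvConcave

theorem ConcaveOn.quasiconcaveOn_div {𝕜 E : Type*} [Field 𝕜] [LinearOrder 𝕜]
    [IsStrictOrderedRing 𝕜] [AddCommGroup E] [Module 𝕜 E] {s : Set E} {f g : E → 𝕜}
    (hf : ConcaveOn 𝕜 s f) (hg : ConvexOn 𝕜 s g) (hf0 : ∀ x ∈ s, 0 ≤ f x)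
    (hg0 : ∀ x ∈ s, 0 < g x) :
    QuasiconcaveOn 𝕜 s fun x => f x / g x := by
  intro t
  rcases le_or_gt t 0 with ht | ht
  · convert hf.1 using 1
    ext x
    exact ⟨And.left, fun hx => ⟨hx, ht.trans (div_nonneg (hf0 x hx) (hg0 x hx).le)⟩⟩
  · convert (hf.sub (hg.smul ht.le)).convex_ge 0 using 1
    ext x
    refine and_congr_right fun hx => ?_
    rw [le_div_iff₀ (hg0 x hx), Pi.sub_apply, sub_nonneg, smul_eq_mul, mul_comm]

theorem QuasiconcaveOn.exists_mem_extremePoints_isMinOn {E β : Type*} [AddCommGroup E]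
    [Module ℝ E] [TopologicalSpace E] [T2Space E] [IsTopologicalAddGroup E]
    [ContinuousSMul ℝ E] [LocallyConvexSpace ℝ E] [LinearOrder β] {K : Set E} {f : E → β}
    (hf : QuasiconcaveOn ℝ K f) (hK : IsCompact K) (hKne : K.Nonempty)
    (hext : (K.extremePoints ℝ).Finite) :
    ∃ z ∈ K.extremePoints ℝ, IsMinOn f K z := by
  have hhull : convexHull ℝ (K.extremePoints ℝ) = K := by
    rw [← (hext.isCompact_convexHull (𝕜 := ℝ)).isClosed.closure_eq,
      closure_convexHull_extremePoints hK hf.convex]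
  obtain ⟨z, hz, hmin⟩ := Set.exists_min_image _ f hext (hK.extremePoints_nonempty hKne)
  refine ⟨z, hz, isMinOn_iff.2 fun y hy => ?_⟩
  rw [← hhull] at hy
  have hsub : K.extremePoints ℝ ⊆ {x | x ∈ K ∧ f z ≤ f x} :=
    fun x hx => ⟨extremePoints_subset hx, hmin x hx⟩
  exact (convexHull_min hsub (hf (f z)) hy).2

theorem bernVar_pos {s : ℝ} (hs : s ∈ Ioo (0:ℝ) 1) : 0 < bernVar s :=
  mul_pos hs.1 (sub_pos.2 hs.2)

theorem concaveOn_bernVar : ConcaveOn ℝ univ bernVar := by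
  refine ⟨convex_univ, fun x _ y _ a b ha hb hab => ?_⟩
  obtain rfl : b = 1 - a := by linarith
  simp only [bernVar, smul_eq_mul]
  nlinarith [mul_nonneg (mul_nonneg ha hb) (sq_nonneg (x - y))]

theorem concaveOn_bernVar_lineComb (r : ℝ) :
    ConcaveOn ℝ univ fun x : ℝ × ℝ => bernVar ((1 - r) * x.1 + r * x.2) :=
  concaveOn_bernVar.comp_linearMap
    ((1 - r) • LinearMap.fst ℝ ℝ ℝ + r • LinearMap.snd ℝ ℝ ℝ)

theorem lineComb_mem_Ioo {x : ℝ × ℝ} (hx : x ∈ Ioo (0:ℝ) 1 ×ˢ Ioo (0:ℝ) 1) {r : ℝ}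
    (hr : r ∈ Icc (0:ℝ) 1) : (1 - r) * x.1 + r * x.2 ∈ Ioo (0:ℝ) 1 :=
  convex_Ioo 0 1 hx.1 hx.2 (sub_nonneg.2 hr.2) hr.1 (by ring)

theorem intervalIntegrable_klIntegrand {x : ℝ × ℝ} (hx : x ∈ Ioo (0:ℝ) 1 ×ˢ Ioo (0:ℝ) 1) :
    IntervalIntegrable (fun r => r / bernVar ((1 - r) * x.1 + r * x.2))
      MeasureTheory.volume 0 1 :=
  ContinuousOn.intervalIntegrable_of_Icc zero_le_one <|
    continuousOn_id.div (by unfold bernVar; fun_prop) fun r hr =>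
      (bernVar_pos (lineComb_mem_Ioo hx hr)).ne'

theorem klIntegral_pos {x : ℝ × ℝ} (hx : x ∈ Ioo (0:ℝ) 1 ×ˢ Ioo (0:ℝ) 1) :
    0 < klIntegral x :=
  intervalIntegral_pos_of_pos_on (intervalIntegrable_klIntegrand hx)
    (fun _ hr => div_pos hr.1 (bernVar_pos (lineComb_mem_Ioo hx (Ioo_subset_Icc_self hr))))
    zero_lt_one

theorem binKL_eq_sq_mul_klIntegral {a b : ℝ} (ha : a ∈ Ioo (0:ℝ) 1)
    (hb : b ∈ Ioo (0:ℝ) 1) : binKL a b = (b - a) ^ 2 * klIntegral (a, b) := by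
  -- `r ↦ -a log s - (1 - a) log (1 - s)` is an antiderivative, because `s - a = r (b - a)`
  have hderiv : ∀ r ∈ uIcc (0:ℝ) 1, HasDerivAt
      (fun r => -a * log ((1 - r) * a + r * b) - (1 - a) * log (1 - ((1 - r) * a + r * b)))
      ((b - a) ^ 2 * (r / bernVar ((1 - r) * a + r * b))) r := by
    intro r hr
    rw [uIcc_of_le zero_le_one] at hr
    obtain ⟨hs0, hs1⟩ : (1 - r) * a + r * b ∈ Ioo (0:ℝ) 1 :=
      lineComb_mem_Ioo (x := (a, b)) ⟨ha, hb⟩ hr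
    have hs : HasDerivAt (fun r => (1 - r) * a + r * b) (b - a) r :=
      ((((hasDerivAt_id' r).const_sub 1).mul_const a).add
        ((hasDerivAt_id' r).mul_const b)).congr_deriv (by ring)
    refine (((hs.log hs0.ne').const_mul (-a)).sub
      (((hs.const_sub 1).log (sub_pos.2 hs1).ne').const_mul (1 - a))).congr_deriv ?_
    generalize hsr : (1 - r) * a + r * b = s at hs0 hs1 ⊢
    have : 1 - s ≠ 0 := (sub_pos.2 hs1).ne'
    have : s ≠ 0 := hs0.ne'
    simp only [bernVar]
    field_simp
    linear_combination (a - b) * hsr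
  have hFTC := integral_eq_sub_of_hasDerivAt hderiv
    ((intervalIntegrable_klIntegrand (x := (a, b)) ⟨ha, hb⟩).const_mul _)
  rw [integral_const_mul] at hFTC
  rw [klIntegral, hFTC, binKL, log_div ha.1.ne' hb.1.ne',
    log_div (sub_pos.2 ha.2).ne' (sub_pos.2 hb.2).ne']
  simp only [sub_zero, one_mul, zero_mul, add_zero, zero_add, sub_self]
  ring

theorem concaveOn_inv_klIntegral :
    ConcaveOn ℝ (Ioo (0:ℝ) 1 ×ˢ Ioo (0:ℝ) 1) fun x => (klIntegral x)⁻¹ := by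
  have hconv := (convex_Ioo (𝕜 := ℝ) (0:ℝ) 1).prod (convex_Ioo (𝕜 := ℝ) (0:ℝ) 1)
  refine concaveOn_inv_of_le_sq_div_mul_add hconv (fun x hx => klIntegral_pos hx) ?_
  intro x hx y hy a b ha hb hab θ
  have hxy := hconv hx hy ha.le hb.le hab
  have hpt : ∀ r ∈ Icc (0:ℝ) 1,
      r / bernVar ((1 - r) * (a • x + b • y).1 + r * (a • x + b • y).2) ≤
        θ ^ 2 / a * (r / bernVar ((1 - r) * x.1 + r * x.2)) +
          (1 - θ) ^ 2 / b * (r / bernVar ((1 - r) * y.1 + r * y.2)) := by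
    intro r hr
    have hpos : ∀ z ∈ Ioo (0:ℝ) 1 ×ˢ Ioo (0:ℝ) 1,
        0 < (bernVar ((1 - r) * z.1 + r * z.2))⁻¹ :=
      fun z hz => inv_pos.2 (bernVar_pos (lineComb_mem_Ioo hz hr))
    have hker := ConcaveOn.le_sq_div_mul_add_of_inv
      (f := fun z : ℝ × ℝ => (bernVar ((1 - r) * z.1 + r * z.2))⁻¹)
      (by simpa only [inv_inv] using
        (concaveOn_bernVar_lineComb r).subset (subset_univ _) hconv)
      hpos hx hy ha hb hab θ
    have := mul_le_mul_of_nonneg_left hker hr.1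
    simp only [div_eq_mul_inv] at this ⊢
    linarith
  calc klIntegral (a • x + b • y)
      ≤ ∫ r in (0:ℝ)..1, (θ ^ 2 / a * (r / bernVar ((1 - r) * x.1 + r * x.2)) +
          (1 - θ) ^ 2 / b * (r / bernVar ((1 - r) * y.1 + r * y.2))) :=
        integral_mono_on zero_le_one (intervalIntegrable_klIntegrand hxy)
          (((intervalIntegrable_klIntegrand hx).const_mul _).add
            ((intervalIntegrable_klIntegrand hy).const_mul _)) hpt
    _ = θ ^ 2 / a * klIntegral x + (1 - θ) ^ 2 / b * klIntegral y := by
        rw [integral_add ((intervalIntegrable_klIntegrand hx).const_mul _)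
          ((intervalIntegrable_klIntegrand hy).const_mul _), integral_const_mul,
          integral_const_mul, klIntegral, klIntegral]

theorem concaveOn_inv_klIntegral_swap :
    ConcaveOn ℝ (Ioo (0:ℝ) 1 ×ˢ Ioo (0:ℝ) 1) fun x => (klIntegral x.swap)⁻¹ :=
  ⟨concaveOn_inv_klIntegral.1, fun _ hx _ hy _ _ ha hb hab =>
    concaveOn_inv_klIntegral.2 (mem_prod.2 ⟨hx.2, hx.1⟩) (mem_prod.2 ⟨hy.2, hy.1⟩) ha hb hab⟩

theorem quantizerCost_eq_div {c0 c1 : ℝ} {x : ℝ × ℝ}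
    (hx : x ∈ Ioo (0:ℝ) 1 ×ˢ Ioo (0:ℝ) 1) (hne : x.1 ≠ x.2) :
    quantizerCost c0 c1 x =
      (c0 * (klIntegral x)⁻¹ + c1 * (klIntegral x.swap)⁻¹) / (x.1 - x.2) ^ 2 := by
  have hJ := klIntegral_pos hx
  have hJswap := klIntegral_pos (x := x.swap) ⟨hx.2, hx.1⟩
  have hsub : x.1 - x.2 ≠ 0 := sub_ne_zero.2 hne
  have hswap : (x.2, x.1) = x.swap := rfl
  rw [quantizerCost, binKL_eq_sq_mul_klIntegral hx.1 hx.2,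
    binKL_eq_sq_mul_klIntegral hx.2 hx.1, Prod.mk.eta, hswap]
  field_simp
  ring

theorem quasiconcaveOn_quantizerCost {c0 c1 : ℝ} (hc0 : 0 ≤ c0) (hc1 : 0 ≤ c1)
    {K : Set (ℝ × ℝ)} (hKsub : K ⊆ {p : ℝ × ℝ | p ∈ Ioo (0:ℝ) 1 ×ˢ Ioo (0:ℝ) 1 ∧ p.1 ≠ p.2})
    (hKconv : Convex ℝ K) :
    QuasiconcaveOn ℝ K (quantizerCost c0 c1) := by
  have hF : ConcaveOn ℝ K fun x => c0 * (klIntegral x)⁻¹ + c1 * (klIntegral x.swap)⁻¹ :=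
    ((concaveOn_inv_klIntegral.smul hc0).add (concaveOn_inv_klIntegral_swap.smul hc1)).subset
      (fun x hx => (hKsub hx).1) hKconv
  have hg : ConvexOn ℝ K fun x : ℝ × ℝ => (x.1 - x.2) ^ 2 :=
    ((Even.convexOn_pow (𝕜 := ℝ) even_two).comp_linearMap
      (LinearMap.fst ℝ ℝ ℝ - LinearMap.snd ℝ ℝ ℝ)).subset (subset_univ _) hKconv
  have hq := hF.quasiconcaveOn_div hg
    (fun x hx => add_nonneg (mul_nonneg hc0 (inv_nonneg.2 (klIntegral_pos (hKsub hx).1).le))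
      (mul_nonneg hc1 (inv_nonneg.2 (klIntegral_pos ⟨(hKsub hx).1.2, (hKsub hx).1.1⟩).le)))
    (fun x hx => sq_pos_of_ne_zero (sub_ne_zero.2 (hKsub hx).2))
  intro t
  have hsets : {x | x ∈ K ∧ t ≤ quantizerCost c0 c1 x} =
      {x | x ∈ K ∧
        t ≤ (c0 * (klIntegral x)⁻¹ + c1 * (klIntegral x.swap)⁻¹) / (x.1 - x.2) ^ 2} :=
    ext fun x => and_congr_right fun hx => by
      rw [quantizerCost_eq_div (hKsub hx).1 (hKsub hx).2]
  rw [hsets]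
  exact hq t

/-- The sequential cost coefficient of a binary quantizer attains its minimum
over a compact convex set with finitely many extreme points at an extreme point. -/
theorem stmt_17 (c0 c1 : ℝ) (hc0 : 0 ≤ c0) (hc1 : 0 ≤ c1)
    (K : Set (ℝ × ℝ)) (hKne : K.Nonempty)
    (hKsub : K ⊆ {p : ℝ × ℝ | p ∈ Set.Ioo (0:ℝ) 1 ×ˢ Set.Ioo (0:ℝ) 1 ∧ p.1 ≠ p.2})
    (hKcomp : IsCompact K) (hKconv : Convex ℝ K)
    (hKext : (Set.extremePoints ℝ K).Finite) :
    ∃ z ∈ Set.extremePoints ℝ K, ∀ y ∈ K,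
      (c0 / (z.1 * Real.log (z.1 / z.2) +
               (1 - z.1) * Real.log ((1 - z.1) / (1 - z.2))) +
       c1 / (z.2 * Real.log (z.2 / z.1) +
               (1 - z.2) * Real.log ((1 - z.2) / (1 - z.1)))) ≤
      (c0 / (y.1 * Real.log (y.1 / y.2) +
               (1 - y.1) * Real.log ((1 - y.1) / (1 - y.2))) +
       c1 / (y.2 * Real.log (y.2 / y.1) +
               (1 - y.2) * Real.log ((1 - y.2) / (1 - y.1)))) := by
  have hG := quasiconcaveOn_quantizerCost hc0 hc1 hKsub hKconv
  obtain ⟨z, hz, hmin⟩ := hG.exists_mem_extremePoints_isMinOn hKcomp hKne hKext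
  exact ⟨z, hz, isMinOn_iff.1 hmin⟩
end
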